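/- arXiv:2311.00676 — 2 statements merged into one kernel-verified Lean document; each statement's English description precedes it below -/
import Mathlib

section
/- Suppose the matrix game given by A admits a strict Nash equilibrium (x*, y*), i.e., a Nash equilibrium such that x* is the unique minimizer over Δ^{d1} of x ↦ xᵀAy* and y* is the unique maximizer over Δ^{d2} of y ↦ (x*)ᵀAy. Then the strategy iterates (x^t, y^t) produced by RM+ converge to (x*, y*) as t → ∞. -/
open scoped BigOperators RealInnerProductSpace
open Filter Topology

noncomputable section

abbrev Vec (d : ℕ) := EuclideanSpace ℝ (Fin d)
abbrev Joint (d1 d2 : ℕ) := EuclideanSpace ℝ (Fin d1 ⊕ Fin d2)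

/-- First block of a joint vector. -/
def xPart {d1 d2 : ℕ} (z : Joint d1 d2) : Vec d1 := WithLp.toLp 2 (fun i => z (Sum.inl i))

/-- Second block of a joint vector. -/
def yPart {d1 d2 : ℕ} (z : Joint d1 d2) : Vec d2 := WithLp.toLp 2 (fun j => z (Sum.inr j))

/-- Assemble a joint vector from its two blocks. -/
def joinPt {d1 d2 : ℕ} (x : Vec d1) (y : Vec d2) : Joint d1 d2 :=
  WithLp.toLp 2 (fun s => Sum.elim (fun i => x i) (fun j => y j) s)

/-- The probability simplex Δ^d. -/
def simplexSet (d : ℕ) : Set (Vec d) := {x | (∀ i, 0 ≤ x i) ∧ ∑ i, x i = 1}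

/-- The clipped positive orthant Δ^d_≥. -/
def clippedSet (d : ℕ) : Set (Vec d) := {u | (∀ i, 0 ≤ u i) ∧ 1 ≤ ∑ i, u i}

/-- Z = Δ^{d1} × Δ^{d2}, as a subset of the joint Euclidean space. -/
def Zset (d1 d2 : ℕ) : Set (Joint d1 d2) :=
  {z | xPart z ∈ simplexSet d1 ∧ yPart z ∈ simplexSet d2}

/-- Z_≥ = Δ^{d1}_≥ × Δ^{d2}_≥. -/
def ZgeSet (d1 d2 : ℕ) : Set (Joint d1 d2) :=
  {z | xPart z ∈ clippedSet d1 ∧ yPart z ∈ clippedSet d2}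

/-- Bilinear payoff xᵀ A y. -/
def payoff {d1 d2 : ℕ} (A : Matrix (Fin d1) (Fin d2) ℝ) (x : Vec d1) (y : Vec d2) : ℝ :=
  ∑ i, ∑ j, x i * A i j * y j

/-- Duality gap of a pair of strategies. -/
def dualGap {d1 d2 : ℕ} (A : Matrix (Fin d1) (Fin d2) ℝ) (x : Vec d1) (y : Vec d2) : ℝ :=
  sSup ((fun y' => payoff A x y') '' simplexSet d2) -
    sInf ((fun x' => payoff A x' y) '' simplexSet d1)

/-- Nash equilibrium: a feasible pair with zero duality gap. -/
def IsNash {d1 d2 : ℕ} (A : Matrix (Fin d1) (Fin d2) ℝ) (x : Vec d1) (y : Vec d2) : Prop :=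
  x ∈ simplexSet d1 ∧ y ∈ simplexSet d2 ∧ dualGap A x y = 0

/-- Strict Nash equilibrium: unique best responses on both sides. -/
def IsStrictNash {d1 d2 : ℕ} (A : Matrix (Fin d1) (Fin d2) ℝ)
    (xs : Vec d1) (ys : Vec d2) : Prop :=
  IsNash A xs ys ∧
  (∀ x ∈ simplexSet d1, x ≠ xs → payoff A xs ys < payoff A x ys) ∧
  (∀ y ∈ simplexSet d2, y ≠ ys → payoff A xs y < payoff A xs ys)

/-- ℓ₁ normalization of a block. -/
def normPart {d : ℕ} (u : Vec d) : Vec d := (∑ i, |u i|)⁻¹ • u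

/-- ℓ₁ normalization with the convention 0/0 = (1/d)·1. -/
def normPart0 {d : ℕ} (u : Vec d) : Vec d :=
  if (∑ i, |u i|) = 0 then WithLp.toLp 2 (fun _ => (d : ℝ)⁻¹) else (∑ i, |u i|)⁻¹ • u

/-- The normalization operator g. -/
def gNorm {d1 d2 : ℕ} (z : Joint d1 d2) : Joint d1 d2 :=
  joinPt (normPart (xPart z)) (normPart (yPart z))

/-- The regret operator F. -/
def Fop {d1 d2 : ℕ} (A : Matrix (Fin d1) (Fin d2) ℝ) (z : Joint d1 d2) : Joint d1 d2 :=
  joinPt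
    (WithLp.toLp 2 fun i => (∑ j, A i j * normPart (yPart z) j) -
      payoff A (normPart (xPart z)) (normPart (yPart z)))
    (WithLp.toLp 2 fun j => -(∑ i, A i j * normPart (xPart z) i) +
      payoff A (normPart (xPart z)) (normPart (yPart z)))

/-- Spectral (ℓ₂ operator) norm of a matrix. -/
def opNorm {d1 d2 : ℕ} (A : Matrix (Fin d1) (Fin d2) ℝ) : ℝ :=
  ‖LinearMap.toContinuousLinearMap (Matrix.toEuclideanLin A)‖

/-- Lipschitz constant L_F = √6 ‖A‖_op max{d1,d2}. -/
def LF {d1 d2 : ℕ} (A : Matrix (Fin d1) (Fin d2) ℝ) : ℝ :=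
  Real.sqrt 6 * opNorm A * max (d1 : ℝ) (d2 : ℝ)

open Classical in
/-- Euclidean (metric) projection onto a set: the distance minimizer, when it exists. -/
def projOn {E : Type*} [NormedAddCommGroup E] [InnerProductSpace ℝ E]
    (S : Set E) (u : E) : E :=
  if h : ∃ p ∈ S, ∀ q ∈ S, ‖u - p‖ ≤ ‖u - q‖ then h.choose else u

/-- The set of Nash equilibria, in the joint space. -/
def nashSet {d1 d2 : ℕ} (A : Matrix (Fin d1) (Fin d2) ℝ) : Set (Joint d1 d2) :=
  {z | IsNash A (xPart z) (yPart z)}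

/-- SOL(Z_≥, F): solutions of the variational inequality. -/
def SolSet {d1 d2 : ℕ} (A : Matrix (Fin d1) (Fin d2) ℝ) : Set (Joint d1 d2) :=
  {z | z ∈ ZgeSet d1 d2 ∧ ∀ z' ∈ ZgeSet d1 d2, ⟪Fop A z, z - z'⟫ ≤ 0}

/-- p is a limit point of the sequence z: limit of a convergent subsequence. -/
def IsLimitPoint {E : Type*} [TopologicalSpace E] (z : ℕ → E) (p : E) : Prop :=
  ∃ φ : ℕ → ℕ, StrictMono φ ∧ Tendsto (z ∘ φ) atTop (𝓝 p)

/-- The ExRM⁺ dynamics: z are the main iterates, zh the half-iterates. -/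
def ExRM {d1 d2 : ℕ} (A : Matrix (Fin d1) (Fin d2) ℝ) (η : ℝ)
    (z zh : ℕ → Joint d1 d2) : Prop :=
  z 0 ∈ Zset d1 d2 ∧
  (∀ t, zh t = projOn (ZgeSet d1 d2) (z t - η • Fop A (z t))) ∧
  (∀ t, z (t + 1) = projOn (ZgeSet d1 d2) (z t - η • Fop A (zh t)))

/-- The SPRM⁺ dynamics (z^{-1} = w^0). -/
def SPRM {d1 d2 : ℕ} (A : Matrix (Fin d1) (Fin d2) ℝ) (η : ℝ)
    (w z : ℕ → Joint d1 d2) : Prop :=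
  w 0 ∈ Zset d1 d2 ∧
  z 0 = projOn (ZgeSet d1 d2) (w 0 - η • Fop A (w 0)) ∧
  (∀ t, z (t + 1) = projOn (ZgeSet d1 d2) (w (t + 1) - η • Fop A (z t))) ∧
  (∀ t, w (t + 1) = projOn (ZgeSet d1 d2) (w t - η • Fop A (z t)))

/-- z^{t-1} with the convention z^{-1} = w^0. -/
def zPrev {d1 d2 : ℕ} (w z : ℕ → Joint d1 d2) : ℕ → Joint d1 d2 :=
  fun t => if t = 0 then w 0 else z (t - 1)


/-- The RM⁺ dynamics: aggregate payoffs (Rx, Ry) and strategies (x, y). -/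
def RMplus {d1 d2 : ℕ} (A : Matrix (Fin d1) (Fin d2) ℝ)
    (Rx : ℕ → Vec d1) (Ry : ℕ → Vec d2) (x : ℕ → Vec d1) (y : ℕ → Vec d2) : Prop :=
  Rx 0 = 0 ∧ Ry 0 = 0 ∧ x 0 ∈ simplexSet d1 ∧ y 0 ∈ simplexSet d2 ∧
  (∀ t i, Rx (t + 1) i =
    max (Rx t i - ((∑ j, A i j * y t j) - payoff A (x t) (y t))) 0) ∧
  (∀ t j, Ry (t + 1) j =
    max (Ry t j + ((∑ i, A i j * x t i) - payoff A (x t) (y t))) 0) ∧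
  (∀ t, x (t + 1) = normPart0 (Rx (t + 1))) ∧
  (∀ t, y (t + 1) = normPart0 (Ry (t + 1)))

namespace RMaux


def pvec {d : ℕ} (i0 : Fin d) : Vec d := WithLp.toLp 2 (fun k => if k = i0 then (1:ℝ) else 0)

lemma pvec_mem {d : ℕ} (i0 : Fin d) : pvec i0 ∈ simplexSet d := by
  constructor
  · intro i; simp [pvec]; split <;> norm_num
  · simp [pvec]

lemma payoff_left {d1 d2 : ℕ} (A : Matrix (Fin d1) (Fin d2) ℝ) (x : Vec d1) (y : Vec d2) :
    payoff A x y = ∑ i, x i * (∑ j, A i j * y j) := by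
  unfold payoff; congr 1; funext i; rw [Finset.mul_sum]; congr 1; funext j; ring

lemma payoff_right {d1 d2 : ℕ} (A : Matrix (Fin d1) (Fin d2) ℝ) (x : Vec d1) (y : Vec d2) :
    payoff A x y = ∑ j, (∑ i, A i j * x i) * y j := by
  unfold payoff; rw [Finset.sum_comm]; congr 1; funext j
  rw [Finset.sum_mul]; congr 1; funext i; ring

lemma payoff_pvec_left {d1 d2 : ℕ} (A : Matrix (Fin d1) (Fin d2) ℝ) (i0 : Fin d1) (y : Vec d2) :
    payoff A (pvec i0) y = ∑ j, A i0 j * y j := by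
  rw [payoff_left]; simp [pvec]

lemma payoff_pvec_right {d1 d2 : ℕ} (A : Matrix (Fin d1) (Fin d2) ℝ) (x : Vec d1) (j0 : Fin d2) :
    payoff A x (pvec j0) = ∑ i, A i j0 * x i := by
  rw [payoff_right]; simp [pvec]

lemma payoff_pvec_pvec {d1 d2 : ℕ} (A : Matrix (Fin d1) (Fin d2) ℝ) (i0 : Fin d1) (j0 : Fin d2) :
    payoff A (pvec i0) (pvec j0) = A i0 j0 := by
  rw [payoff_pvec_left]; simp [pvec]

lemma normPart0_mem {d : ℕ} (hd : 1 ≤ d) (u : Vec d) (hu : ∀ i, 0 ≤ u i) :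
    normPart0 u ∈ simplexSet d := by
  unfold normPart0
  by_cases h : (∑ i, |u i|) = 0
  · rw [if_pos h]
    have hd0 : (d : ℝ) ≠ 0 := by positivity
    constructor
    · intro i; positivity
    · simp [Finset.sum_const, Finset.card_univ]
      field_simp
  · rw [if_neg h]
    have habs : ∀ i, |u i| = u i := fun i => abs_of_nonneg (hu i)
    have hsum : (∑ i, |u i|) = ∑ i, u i := by simp [habs]
    have hpos : 0 < ∑ i, |u i| := by
      rcases (Finset.sum_nonneg (fun i _ => abs_nonneg (u i))).lt_or_eq with h1 | h1
      · exact h1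
      · exact absurd h1.symm h
    constructor
    · intro i
      have : ((∑ i, |u i|)⁻¹ • u) i = (∑ i, |u i|)⁻¹ * u i := rfl
      rw [this]; exact mul_nonneg (inv_nonneg.2 hpos.le) (hu i)
    · have : ∀ i, ((∑ i', |u i'|)⁻¹ • u) i = (∑ i', |u i'|)⁻¹ * u i := fun _ => rfl
      simp only [this, ← Finset.mul_sum, ← hsum]
      exact inv_mul_cancel₀ h

lemma max_sub_max (u c : ℝ) (hc : 0 ≤ c) : max (max u 0 - c) 0 ≤ max (u - c) 0 := by
  rcases le_total u 0 with h | h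
  · rw [max_eq_right h]; simp [hc]
  · rw [max_eq_left h]



lemma normPart0_apply {d : ℕ} (u : Vec d) (h : (∑ i, |u i|) ≠ 0) (i : Fin d) :
    normPart0 u i = (∑ i', |u i'|)⁻¹ * u i := by
  unfold normPart0; rw [if_neg h]; rfl

lemma sum_abs_pos {d : ℕ} (u : Vec d) (hu : ∀ i, 0 ≤ u i) (i0 : Fin d) (h0 : 0 < u i0) :
    0 < ∑ i, |u i| := by
  have h1 : |u i0| ≤ ∑ i, |u i| :=
    Finset.single_le_sum (fun i _ => abs_nonneg (u i)) (Finset.mem_univ i0)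
  rw [abs_of_nonneg (hu i0)] at h1
  linarith

lemma anchor_pos {d : ℕ} (i0 : Fin d) (ε : ℝ) (hε : ε ≤ 1/4)
    (R xv : Vec d) (hRnn : ∀ i, 0 ≤ R i) (hx : xv = normPart0 R)
    (hgood : (∑ i ∈ Finset.univ.erase i0, xv i) ≤ ε)
    (hE : ∃ i, i ≠ i0) : 0 < R i0 := by
  obtain ⟨i1, hi1⟩ := hE
  have hd : 1 ≤ d := i0.pos
  have hd2 : 2 ≤ d := by
    have : 1 < Fintype.card (Fin d) := Fintype.one_lt_card_iff_nontrivial.2 ⟨⟨i1, i0, hi1⟩⟩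
    simpa [Nat.succ_le_iff] using this
  have hsimp : xv ∈ simplexSet d := hx ▸ normPart0_mem hd R hRnn
  by_cases h : (∑ i, |R i|) = 0
  · exfalso
    have hxv : ∀ i, xv i = (d : ℝ)⁻¹ := by
      intro i; rw [hx]; unfold normPart0; rw [if_pos h]
    have hcard : (Finset.univ.erase i0).card = d - 1 := by
      rw [Finset.card_erase_of_mem (Finset.mem_univ i0), Finset.card_univ, Fintype.card_fin]
    have hsum : (∑ i ∈ Finset.univ.erase i0, xv i) = ((d:ℝ) - 1) * (d:ℝ)⁻¹ := by
      simp only [hxv]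
      rw [Finset.sum_const, hcard, nsmul_eq_mul, Nat.cast_sub hd]
      push_cast; ring
    have hdR : (2:ℝ) ≤ (d:ℝ) := by exact_mod_cast hd2
    have hhalf : (1:ℝ)/2 ≤ ((d:ℝ) - 1) * (d:ℝ)⁻¹ := by
      have hdpos : (0:ℝ) < d := by linarith
      rw [← div_eq_mul_inv, le_div_iff₀ hdpos]
      linarith
    rw [hsum] at hgood
    linarith
  · have hxvi : xv i0 = (∑ i', |R i'|)⁻¹ * R i0 := by rw [hx]; exact normPart0_apply R h i0
    have hspos : 0 < ∑ i, |R i| :=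
      (Finset.sum_nonneg (fun i _ => abs_nonneg (R i))).lt_of_ne' h
    have hsplit : xv i0 + ∑ i ∈ Finset.univ.erase i0, xv i = 1 := by
      rw [Finset.add_sum_erase _ _ (Finset.mem_univ i0)]; exact hsimp.2
    have hxpos : 0 < xv i0 := by linarith
    have : R i0 = (∑ i, |R i|) * xv i0 := by
      rw [hxvi, ← mul_assoc, mul_inv_cancel₀ (ne_of_gt hspos), one_mul]
    rw [this]
    exact mul_pos hspos hxpos

lemma norm_block_mono {d : ℕ} (i0 : Fin d) (ε : ℝ) (hε : ε ≤ 1/4)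
    (R R' xv xv' : Vec d)
    (hRnn : ∀ i, 0 ≤ R i) (hR'nn : ∀ i, 0 ≤ R' i)
    (hx : xv = normPart0 R) (hx' : xv' = normPart0 R')
    (hanchor : R i0 ≤ R' i0) (hothers : ∀ i, i ≠ i0 → R' i ≤ R i)
    (hgood : (∑ i ∈ Finset.univ.erase i0, xv i) ≤ ε) :
    (∑ i ∈ Finset.univ.erase i0, xv' i) ≤ ∑ i ∈ Finset.univ.erase i0, xv i := by
  by_cases hE : ∃ i, i ≠ i0
  · have hRpos : 0 < R i0 := anchor_pos i0 ε hε R xv hRnn hx hgood hE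
    have hR'pos : 0 < R' i0 := lt_of_lt_of_le hRpos hanchor
    have hspos : 0 < ∑ i, |R i| := sum_abs_pos R hRnn i0 hRpos
    have hs'pos : 0 < ∑ i, |R' i| := sum_abs_pos R' hR'nn i0 hR'pos
    have habsR : (∑ i, |R i|) = ∑ i, R i := by
      congr 1; funext i; exact abs_of_nonneg (hRnn i)
    have habsR' : (∑ i, |R' i|) = ∑ i, R' i := by
      congr 1; funext i; exact abs_of_nonneg (hR'nn i)
    have hsplit : (∑ i, R i) = R i0 + ∑ i ∈ Finset.univ.erase i0, R i :=
      (Finset.add_sum_erase _ _ (Finset.mem_univ i0)).symm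
    have hsplit' : (∑ i, R' i) = R' i0 + ∑ i ∈ Finset.univ.erase i0, R' i :=
      (Finset.add_sum_erase _ _ (Finset.mem_univ i0)).symm
    have hxvsum : (∑ i ∈ Finset.univ.erase i0, xv i)
        = (∑ i, R i)⁻¹ * ∑ i ∈ Finset.univ.erase i0, R i := by
      rw [Finset.mul_sum]
      apply Finset.sum_congr rfl
      intro i _
      rw [hx, normPart0_apply R (ne_of_gt hspos), habsR]
    have hxvsum' : (∑ i ∈ Finset.univ.erase i0, xv' i)
        = (∑ i, R' i)⁻¹ * ∑ i ∈ Finset.univ.erase i0, R' i := by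
      rw [Finset.mul_sum]
      apply Finset.sum_congr rfl
      intro i _
      rw [hx', normPart0_apply R' (ne_of_gt hs'pos), habsR']
    set N := ∑ i ∈ Finset.univ.erase i0, R i with hN
    set N' := ∑ i ∈ Finset.univ.erase i0, R' i with hN'
    have hNnn : 0 ≤ N := Finset.sum_nonneg fun i _ => hRnn i
    have hN'nn : 0 ≤ N' := Finset.sum_nonneg fun i _ => hR'nn i
    have hN'leN : N' ≤ N := Finset.sum_le_sum fun i hi =>
      hothers i (Finset.mem_erase.1 hi).1
    rw [hxvsum, hxvsum', hsplit, hsplit', inv_mul_eq_div, inv_mul_eq_div,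
      div_le_div_iff₀ (by linarith) (by linarith)]
    nlinarith [mul_le_mul hN'leN hanchor hRpos.le hNnn]
  · have hemp : Finset.univ.erase i0 = ∅ := by
      apply Finset.eq_empty_of_forall_notMem
      intro i hi
      exact hE ⟨i, (Finset.mem_erase.1 hi).1⟩
    rw [hemp]; simp

lemma norm_block_pure {d : ℕ} (i0 : Fin d) (R xv : Vec d)
    (hRnn : ∀ i, 0 ≤ R i) (hx : xv = normPart0 R)
    (hanch : (∃ i, i ≠ i0) → 0 < R i0) (hz : ∀ i, i ≠ i0 → R i = 0) :
    xv = pvec i0 := by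
  have hsimp : xv ∈ simplexSet d := hx ▸ normPart0_mem i0.pos R hRnn
  have hzero_x : ∀ i, i ≠ i0 → xv i = 0 := by
    intro i hi
    have hRpos : 0 < R i0 := hanch ⟨i, hi⟩
    have hspos : 0 < ∑ i', |R i'| := sum_abs_pos R hRnn i0 hRpos
    rw [hx, normPart0_apply R (ne_of_gt hspos), hz i hi, mul_zero]
  have hx0 : xv i0 = 1 := by
    have hsplit : xv i0 + ∑ i ∈ Finset.univ.erase i0, xv i = 1 := by
      rw [Finset.add_sum_erase _ _ (Finset.mem_univ i0)]; exact hsimp.2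
    have : (∑ i ∈ Finset.univ.erase i0, xv i) = 0 :=
      Finset.sum_eq_zero fun i hi => hzero_x i (Finset.mem_erase.1 hi).1
    linarith
  ext i
  by_cases h : i = i0
  · subst h; rw [hx0]; simp [pvec]
  · rw [hzero_x i h]; simp [pvec, h]

lemma row_abs_le {d1 d2 : ℕ} (A : Matrix (Fin d1) (Fin d2) ℝ) (α : ℝ)
    (habsA : ∀ i j, |A i j| ≤ α) (i : Fin d1) (y : Vec d2) (hy : y ∈ simplexSet d2) :
    |∑ j, A i j * y j| ≤ α := by
  calc |∑ j, A i j * y j| ≤ ∑ j, |A i j * y j| := Finset.abs_sum_le_sum_abs _ _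
    _ ≤ ∑ j, α * y j := by
        apply Finset.sum_le_sum
        intro j _
        rw [abs_mul, abs_of_nonneg (hy.1 j)]
        exact mul_le_mul_of_nonneg_right (habsA i j) (hy.1 j)
    _ = α := by rw [← Finset.mul_sum, hy.2, mul_one]

lemma col_abs_le {d1 d2 : ℕ} (A : Matrix (Fin d1) (Fin d2) ℝ) (α : ℝ)
    (habsA : ∀ i j, |A i j| ≤ α) (j : Fin d2) (x : Vec d1) (hx : x ∈ simplexSet d1) :
    |∑ i, A i j * x i| ≤ α := by
  calc |∑ i, A i j * x i| ≤ ∑ i, |A i j * x i| := Finset.abs_sum_le_sum_abs _ _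
    _ ≤ ∑ i, α * x i := by
        apply Finset.sum_le_sum
        intro i _
        rw [abs_mul, abs_of_nonneg (hx.1 i)]
        exact mul_le_mul_of_nonneg_right (habsA i j) (hx.1 i)
    _ = α := by rw [← Finset.mul_sum, hx.2, mul_one]

lemma payoff_abs_le {d1 d2 : ℕ} (A : Matrix (Fin d1) (Fin d2) ℝ) (α : ℝ)
    (habsA : ∀ i j, |A i j| ≤ α) (x : Vec d1) (y : Vec d2)
    (hx : x ∈ simplexSet d1) (hy : y ∈ simplexSet d2) :
    |payoff A x y| ≤ α := by
  rw [payoff_left]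
  calc |∑ i, x i * (∑ j, A i j * y j)| ≤ ∑ i, |x i * (∑ j, A i j * y j)| :=
        Finset.abs_sum_le_sum_abs _ _
    _ ≤ ∑ i, x i * α := by
        apply Finset.sum_le_sum
        intro i _
        rw [abs_mul, abs_of_nonneg (hx.1 i)]
        exact mul_le_mul_of_nonneg_left (row_abs_le A α habsA i y hy) (hx.1 i)
    _ = α := by rw [← Finset.sum_mul, hx.2, one_mul]

/-- Deviation of a row payoff from the pure column j0. -/
lemma row_near {d1 d2 : ℕ} (A : Matrix (Fin d1) (Fin d2) ℝ) (α : ℝ)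
    (habsA : ∀ i j, |A i j| ≤ α) (j0 : Fin d2) (i : Fin d1) (y : Vec d2)
    (hy : y ∈ simplexSet d2) :
    |(∑ j, A i j * y j) - A i j0| ≤ 2 * α * ∑ j ∈ Finset.univ.erase j0, y j := by
  have he : (∑ j, A i j * y j) - A i j0
      = ∑ j ∈ Finset.univ.erase j0, (A i j - A i j0) * y j := by
    have h1 : ∑ j, (A i j - A i j0) * y j = (∑ j, A i j * y j) - A i j0 := by
      simp only [sub_mul]
      rw [Finset.sum_sub_distrib, ← Finset.mul_sum, hy.2, mul_one]
    have h2 : (A i j0 - A i j0) * y j0 + ∑ j ∈ Finset.univ.erase j0, (A i j - A i j0) * y j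
        = ∑ j, (A i j - A i j0) * y j :=
      Finset.add_sum_erase _ (fun j => (A i j - A i j0) * y j) (Finset.mem_univ j0)
    rw [← h1, ← h2, sub_self, zero_mul, zero_add]
  rw [he]
  calc |∑ j ∈ Finset.univ.erase j0, (A i j - A i j0) * y j|
      ≤ ∑ j ∈ Finset.univ.erase j0, |(A i j - A i j0) * y j| := Finset.abs_sum_le_sum_abs _ _
    _ ≤ ∑ j ∈ Finset.univ.erase j0, 2 * α * y j := by
        apply Finset.sum_le_sum
        intro j _
        rw [abs_mul, abs_of_nonneg (hy.1 j)]
        apply mul_le_mul_of_nonneg_right _ (hy.1 j)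
        calc |A i j - A i j0| ≤ |A i j| + |A i j0| := abs_sub _ _
          _ ≤ 2 * α := by have := habsA i j; have := habsA i j0; linarith
    _ = 2 * α * ∑ j ∈ Finset.univ.erase j0, y j := by rw [Finset.mul_sum]

lemma col_near {d1 d2 : ℕ} (A : Matrix (Fin d1) (Fin d2) ℝ) (α : ℝ)
    (habsA : ∀ i j, |A i j| ≤ α) (i0 : Fin d1) (j : Fin d2) (x : Vec d1)
    (hx : x ∈ simplexSet d1) :
    |(∑ i, A i j * x i) - A i0 j| ≤ 2 * α * ∑ i ∈ Finset.univ.erase i0, x i := by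
  have he : (∑ i, A i j * x i) - A i0 j
      = ∑ i ∈ Finset.univ.erase i0, (A i j - A i0 j) * x i := by
    have h1 : ∑ i, (A i j - A i0 j) * x i = (∑ i, A i j * x i) - A i0 j := by
      simp only [sub_mul]
      rw [Finset.sum_sub_distrib, ← Finset.mul_sum, hx.2, mul_one]
    have h2 : (A i0 j - A i0 j) * x i0 + ∑ i ∈ Finset.univ.erase i0, (A i j - A i0 j) * x i
        = ∑ i, (A i j - A i0 j) * x i :=
      Finset.add_sum_erase _ (fun i => (A i j - A i0 j) * x i) (Finset.mem_univ i0)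
    rw [← h1, ← h2, sub_self, zero_mul, zero_add]
  rw [he]
  calc |∑ i ∈ Finset.univ.erase i0, (A i j - A i0 j) * x i|
      ≤ ∑ i ∈ Finset.univ.erase i0, |(A i j - A i0 j) * x i| := Finset.abs_sum_le_sum_abs _ _
    _ ≤ ∑ i ∈ Finset.univ.erase i0, 2 * α * x i := by
        apply Finset.sum_le_sum
        intro i _
        rw [abs_mul, abs_of_nonneg (hx.1 i)]
        apply mul_le_mul_of_nonneg_right _ (hx.1 i)
        calc |A i j - A i0 j| ≤ |A i j| + |A i0 j| := abs_sub _ _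
          _ ≤ 2 * α := by have := habsA i j; have := habsA i0 j; linarith
    _ = 2 * α * ∑ i ∈ Finset.univ.erase i0, x i := by rw [Finset.mul_sum]

/-- payoff is close to the i0-row payoff when x is concentrated at i0. -/
lemma payoff_near_row {d1 d2 : ℕ} (A : Matrix (Fin d1) (Fin d2) ℝ) (α : ℝ)
    (habsA : ∀ i j, |A i j| ≤ α) (i0 : Fin d1) (x : Vec d1) (y : Vec d2)
    (hx : x ∈ simplexSet d1) (hy : y ∈ simplexSet d2) :
    |payoff A x y - (∑ j, A i0 j * y j)| ≤ 2 * α * ∑ i ∈ Finset.univ.erase i0, x i := by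
  have he : payoff A x y - (∑ j, A i0 j * y j)
      = ∑ i ∈ Finset.univ.erase i0, x i * ((∑ j, A i j * y j) - (∑ j, A i0 j * y j)) := by
    rw [payoff_left]
    have h1 : ∑ i, x i * ((∑ j, A i j * y j) - (∑ j, A i0 j * y j))
        = (∑ i, x i * (∑ j, A i j * y j)) - (∑ j, A i0 j * y j) := by
      simp only [mul_sub]
      rw [Finset.sum_sub_distrib, ← Finset.sum_mul, hx.2, one_mul]
    have h2 : x i0 * ((∑ j, A i0 j * y j) - (∑ j, A i0 j * y j))
        + ∑ i ∈ Finset.univ.erase i0, x i * ((∑ j, A i j * y j) - (∑ j, A i0 j * y j))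
        = ∑ i, x i * ((∑ j, A i j * y j) - (∑ j, A i0 j * y j)) :=
      Finset.add_sum_erase _ (fun i => x i * ((∑ j, A i j * y j) - (∑ j, A i0 j * y j))) (Finset.mem_univ i0)
    rw [← h1, ← h2, sub_self, mul_zero, zero_add]
  rw [he]
  calc |∑ i ∈ Finset.univ.erase i0, x i * ((∑ j, A i j * y j) - (∑ j, A i0 j * y j))|
      ≤ ∑ i ∈ Finset.univ.erase i0, |x i * ((∑ j, A i j * y j) - (∑ j, A i0 j * y j))| :=
        Finset.abs_sum_le_sum_abs _ _
    _ ≤ ∑ i ∈ Finset.univ.erase i0, x i * (2 * α) := by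
        apply Finset.sum_le_sum
        intro i _
        rw [abs_mul, abs_of_nonneg (hx.1 i)]
        apply mul_le_mul_of_nonneg_left _ (hx.1 i)
        calc |(∑ j, A i j * y j) - (∑ j, A i0 j * y j)|
            ≤ |∑ j, A i j * y j| + |∑ j, A i0 j * y j| := abs_sub _ _
          _ ≤ 2 * α := by
              have := row_abs_le A α habsA i y hy
              have := row_abs_le A α habsA i0 y hy
              linarith
    _ = 2 * α * ∑ i ∈ Finset.univ.erase i0, x i := by rw [← Finset.sum_mul]; ring

lemma payoff_near_col {d1 d2 : ℕ} (A : Matrix (Fin d1) (Fin d2) ℝ) (α : ℝ)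
    (habsA : ∀ i j, |A i j| ≤ α) (j0 : Fin d2) (x : Vec d1) (y : Vec d2)
    (hx : x ∈ simplexSet d1) (hy : y ∈ simplexSet d2) :
    |payoff A x y - (∑ i, A i j0 * x i)| ≤ 2 * α * ∑ j ∈ Finset.univ.erase j0, y j := by
  have he : payoff A x y - (∑ i, A i j0 * x i)
      = ∑ j ∈ Finset.univ.erase j0, ((∑ i, A i j * x i) - (∑ i, A i j0 * x i)) * y j := by
    rw [payoff_right]
    have h1 : ∑ j, ((∑ i, A i j * x i) - (∑ i, A i j0 * x i)) * y j
        = (∑ j, (∑ i, A i j * x i) * y j) - (∑ i, A i j0 * x i) := by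
      simp only [sub_mul]
      rw [Finset.sum_sub_distrib, ← Finset.mul_sum, hy.2, mul_one]
    have h2 : ((∑ i, A i j0 * x i) - (∑ i, A i j0 * x i)) * y j0
        + ∑ j ∈ Finset.univ.erase j0, ((∑ i, A i j * x i) - (∑ i, A i j0 * x i)) * y j
        = ∑ j, ((∑ i, A i j * x i) - (∑ i, A i j0 * x i)) * y j :=
      Finset.add_sum_erase _ (fun j => ((∑ i, A i j * x i) - (∑ i, A i j0 * x i)) * y j) (Finset.mem_univ j0)
    rw [← h1, ← h2, sub_self, zero_mul, zero_add]
  rw [he]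
  calc |∑ j ∈ Finset.univ.erase j0, ((∑ i, A i j * x i) - (∑ i, A i j0 * x i)) * y j|
      ≤ ∑ j ∈ Finset.univ.erase j0, |((∑ i, A i j * x i) - (∑ i, A i j0 * x i)) * y j| :=
        Finset.abs_sum_le_sum_abs _ _
    _ ≤ ∑ j ∈ Finset.univ.erase j0, (2 * α) * y j := by
        apply Finset.sum_le_sum
        intro j _
        rw [abs_mul, abs_of_nonneg (hy.1 j)]
        apply mul_le_mul_of_nonneg_right _ (hy.1 j)
        calc |(∑ i, A i j * x i) - (∑ i, A i j0 * x i)|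
            ≤ |∑ i, A i j * x i| + |∑ i, A i j0 * x i| := abs_sub _ _
          _ ≤ 2 * α := by
              have := col_abs_le A α habsA j x hx
              have := col_abs_le A α habsA j0 x hx
              linarith
    _ = 2 * α * ∑ j ∈ Finset.univ.erase j0, y j := by rw [Finset.mul_sum]


lemma payoff_sub_row_eq {d1 d2 : ℕ} (A : Matrix (Fin d1) (Fin d2) ℝ) (i0 : Fin d1)
    (x : Vec d1) (y : Vec d2) (hx : x ∈ simplexSet d1) :
    payoff A x y - (∑ j, A i0 j * y j)
      = ∑ i ∈ Finset.univ.erase i0, x i * ((∑ j, A i j * y j) - (∑ j, A i0 j * y j)) := by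
  rw [payoff_left]
  have h1 : ∑ i, x i * ((∑ j, A i j * y j) - (∑ j, A i0 j * y j))
      = (∑ i, x i * (∑ j, A i j * y j)) - (∑ j, A i0 j * y j) := by
    simp only [mul_sub]
    rw [Finset.sum_sub_distrib, ← Finset.sum_mul, hx.2, one_mul]
  have h2 : x i0 * ((∑ j, A i0 j * y j) - (∑ j, A i0 j * y j))
      + ∑ i ∈ Finset.univ.erase i0, x i * ((∑ j, A i j * y j) - (∑ j, A i0 j * y j))
      = ∑ i, x i * ((∑ j, A i j * y j) - (∑ j, A i0 j * y j)) :=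
    Finset.add_sum_erase _ (fun i => x i * ((∑ j, A i j * y j) - (∑ j, A i0 j * y j))) (Finset.mem_univ i0)
  rw [← h1, ← h2, sub_self, mul_zero, zero_add]

lemma payoff_sub_col_eq {d1 d2 : ℕ} (A : Matrix (Fin d1) (Fin d2) ℝ) (j0 : Fin d2)
    (x : Vec d1) (y : Vec d2) (hy : y ∈ simplexSet d2) :
    payoff A x y - (∑ i, A i j0 * x i)
      = ∑ j ∈ Finset.univ.erase j0, ((∑ i, A i j * x i) - (∑ i, A i j0 * x i)) * y j := by
  rw [payoff_right]
  have h1 : ∑ j, ((∑ i, A i j * x i) - (∑ i, A i j0 * x i)) * y j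
      = (∑ j, (∑ i, A i j * x i) * y j) - (∑ i, A i j0 * x i) := by
    simp only [sub_mul]
    rw [Finset.sum_sub_distrib, ← Finset.mul_sum, hy.2, mul_one]
  have h2 : ((∑ i, A i j0 * x i) - (∑ i, A i j0 * x i)) * y j0
      + ∑ j ∈ Finset.univ.erase j0, ((∑ i, A i j * x i) - (∑ i, A i j0 * x i)) * y j
      = ∑ j, ((∑ i, A i j * x i) - (∑ i, A i j0 * x i)) * y j :=
    Finset.add_sum_erase _ (fun j => ((∑ i, A i j * x i) - (∑ i, A i j0 * x i)) * y j) (Finset.mem_univ j0)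
  rw [← h1, ← h2, sub_self, zero_mul, zero_add]

lemma step {d1 d2 : ℕ} (A : Matrix (Fin d1) (Fin d2) ℝ) (i0 : Fin d1) (j0 : Fin d2)
    (α δ ε : ℝ) (hα : 0 ≤ α)
    (habsA : ∀ i j, |A i j| ≤ α)
    (hδpos : 0 < δ)
    (hδgx : ∀ i, i ≠ i0 → δ ≤ A i j0 - A i0 j0)
    (hδgy : ∀ j, j ≠ j0 → δ ≤ A i0 j0 - A i0 j)
    (hεpos : 0 < ε) (hε14 : ε ≤ 1/4) (hεle : 6 * α * ε ≤ δ / 2)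
    (Rx Rx' x x' : Vec d1) (Ry Ry' y y' : Vec d2)
    (hRxnn : ∀ i, 0 ≤ Rx i) (hRynn : ∀ j, 0 ≤ Ry j)
    (hx : x = normPart0 Rx) (hy : y = normPart0 Ry)
    (hRx' : ∀ i, Rx' i = max (Rx i - ((∑ j, A i j * y j) - payoff A x y)) 0)
    (hRy' : ∀ j, Ry' j = max (Ry j + ((∑ i, A i j * x i) - payoff A x y)) 0)
    (hx' : x' = normPart0 Rx') (hy' : y' = normPart0 Ry')
    (hgx : (∑ i ∈ Finset.univ.erase i0, x i) ≤ ε)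
    (hgy : (∑ j ∈ Finset.univ.erase j0, y j) ≤ ε) :
    (∑ i ∈ Finset.univ.erase i0, x' i) ≤ (∑ i ∈ Finset.univ.erase i0, x i) ∧
    (∑ j ∈ Finset.univ.erase j0, y' j) ≤ (∑ j ∈ Finset.univ.erase j0, y j) ∧
    Rx i0 ≤ Rx' i0 ∧ Ry j0 ≤ Ry' j0 ∧
    (∀ i, i ≠ i0 → Rx' i ≤ max (Rx i - δ/2) 0) ∧
    (∀ j, j ≠ j0 → Ry' j ≤ max (Ry j - δ/2) 0) := by
  have hd1 : 1 ≤ d1 := i0.pos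
  have hd2 : 1 ≤ d2 := j0.pos
  have hxs : x ∈ simplexSet d1 := hx ▸ normPart0_mem hd1 Rx hRxnn
  have hys : y ∈ simplexSet d2 := hy ▸ normPart0_mem hd2 Ry hRynn
  have hsxnn : 0 ≤ ∑ i ∈ Finset.univ.erase i0, x i := Finset.sum_nonneg fun i _ => hxs.1 i
  have hsynn : 0 ≤ ∑ j ∈ Finset.univ.erase j0, y j := Finset.sum_nonneg fun j _ => hys.1 j
  have hαsx : α * (∑ i ∈ Finset.univ.erase i0, x i) ≤ α * ε := mul_le_mul_of_nonneg_left hgx hα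
  have hαsy : α * (∑ j ∈ Finset.univ.erase j0, y j) ≤ α * ε := mul_le_mul_of_nonneg_left hgy hα
  have hαε : 0 ≤ α * ε := mul_nonneg hα hεpos.le
  have hprow := abs_le.1 (payoff_near_row A α habsA i0 x y hxs hys)
  have hpcol := abs_le.1 (payoff_near_col A α habsA j0 x y hxs hys)
  have hrow : ∀ i, _ := fun i => abs_le.1 (row_near A α habsA j0 i y hys)
  have hcol : ∀ j, _ := fun j => abs_le.1 (col_near A α habsA i0 j x hxs)
  have hvle : ∀ i, A i0 j0 ≤ A i j0 := by
    intro i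
    by_cases h : i = i0
    · subst h; exact le_refl _
    · have := hδgx i h; linarith
  have hvleAx : A i0 j0 ≤ ∑ i, A i j0 * x i := by
    calc A i0 j0 = ∑ i, A i0 j0 * x i := by rw [← Finset.mul_sum, hxs.2, mul_one]
      _ ≤ ∑ i, A i j0 * x i :=
        Finset.sum_le_sum fun i _ => mul_le_mul_of_nonneg_right (hvle i) (hxs.1 i)
  have k1 : ∀ i, i ≠ i0 → payoff A x y - (∑ j, A i j * y j) ≤ -(δ/2) := by
    intro i hi
    have h1 := hrow i
    have h2 := hrow i0
    have h4 := hδgx i hi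
    obtain ⟨h1a, h1b⟩ := h1; obtain ⟨h2a, h2b⟩ := h2; obtain ⟨h3a, h3b⟩ := hprow
    linarith
  have k2 : 0 ≤ payoff A x y - (∑ j, A i0 j * y j) := by
    rw [payoff_sub_row_eq A i0 x y hxs]
    apply Finset.sum_nonneg
    intro i hi
    have hine : i ≠ i0 := (Finset.mem_erase.1 hi).1
    apply mul_nonneg (hxs.1 i)
    have h1 := hrow i
    have h2 := hrow i0
    have h4 := hδgx i hine
    obtain ⟨h1a, h1b⟩ := h1; obtain ⟨h2a, h2b⟩ := h2
    linarith
  have k3 : ∀ j, j ≠ j0 → (∑ i, A i j * x i) - payoff A x y ≤ -(δ/2) := by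
    intro j hj
    have h1 := hcol j
    have h4 := hδgy j hj
    obtain ⟨h1a, h1b⟩ := h1; obtain ⟨h3a, h3b⟩ := hpcol
    linarith
  have k4 : 0 ≤ (∑ i, A i j0 * x i) - payoff A x y := by
    have he := payoff_sub_col_eq A j0 x y hys
    have hle : payoff A x y - (∑ i, A i j0 * x i) ≤ 0 := by
      rw [he]
      apply Finset.sum_nonpos
      intro j hj
      have hjne : j ≠ j0 := (Finset.mem_erase.1 hj).1
      apply mul_nonpos_of_nonpos_of_nonneg _ (hys.1 j)
      have h1 := hcol j
      have h4 := hδgy j hjne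
      obtain ⟨h1a, h1b⟩ := h1
      linarith
    linarith
  have cRxO : ∀ i, i ≠ i0 → Rx' i ≤ max (Rx i - δ/2) 0 := by
    intro i hi
    rw [hRx' i]
    apply max_le_max _ le_rfl
    have := k1 i hi; linarith
  have cRxA : Rx i0 ≤ Rx' i0 := by
    rw [hRx' i0]
    refine le_trans ?_ (le_max_left _ _)
    linarith
  have cRyO : ∀ j, j ≠ j0 → Ry' j ≤ max (Ry j - δ/2) 0 := by
    intro j hj
    rw [hRy' j]
    apply max_le_max _ le_rfl
    have := k3 j hj; linarith
  have cRyA : Ry j0 ≤ Ry' j0 := by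
    rw [hRy' j0]
    refine le_trans ?_ (le_max_left _ _)
    linarith
  have hRx'nn : ∀ i, 0 ≤ Rx' i := fun i => by rw [hRx' i]; exact le_max_right _ _
  have hRy'nn : ∀ j, 0 ≤ Ry' j := fun j => by rw [hRy' j]; exact le_max_right _ _
  have hOx : ∀ i, i ≠ i0 → Rx' i ≤ Rx i := by
    intro i hi
    refine le_trans (cRxO i hi) (max_le (by linarith) (hRxnn i))
  have hOy : ∀ j, j ≠ j0 → Ry' j ≤ Ry j := by
    intro j hj
    refine le_trans (cRyO j hj) (max_le (by linarith) (hRynn j))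
  refine ⟨?_, ?_, cRxA, cRyA, cRxO, cRyO⟩
  · exact norm_block_mono i0 ε hε14 Rx Rx' x x' hRxnn hRx'nn hx hx' cRxA hOx hgx
  · exact norm_block_mono j0 ε hε14 Ry Ry' y y' hRynn hRy'nn hy hy' cRyA hOy hgy


lemma strict_pure {d1 d2 : ℕ} (hd1 : 1 ≤ d1) (hd2 : 1 ≤ d2)
    (A : Matrix (Fin d1) (Fin d2) ℝ) (xs : Vec d1) (ys : Vec d2)
    (hxs : xs ∈ simplexSet d1) (hys : ys ∈ simplexSet d2)
    (hsx : ∀ x ∈ simplexSet d1, x ≠ xs → payoff A xs ys < payoff A x ys)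
    (hsy : ∀ y ∈ simplexSet d2, y ≠ ys → payoff A xs y < payoff A xs ys) :
    ∃ i0 j0, xs = pvec i0 ∧ ys = pvec j0 ∧
      (∀ i, i ≠ i0 → A i0 j0 < A i j0) ∧ (∀ j, j ≠ j0 → A i0 j < A i0 j0) := by
  have hne1 : (Finset.univ : Finset (Fin d1)).Nonempty := by
    simpa [Finset.univ_nonempty_iff] using Fin.pos_iff_nonempty.1 hd1
  have hne2 : (Finset.univ : Finset (Fin d2)).Nonempty := by
    simpa [Finset.univ_nonempty_iff] using Fin.pos_iff_nonempty.1 hd2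
  obtain ⟨i0, -, hi0⟩ := Finset.exists_min_image Finset.univ
    (fun i => ∑ j, A i j * ys j) hne1
  obtain ⟨j0, -, hj0⟩ := Finset.exists_max_image Finset.univ
    (fun j => ∑ i, A i j * xs i) hne2
  have hxeq : xs = pvec i0 := by
    by_contra hne
    have h1 : payoff A xs ys < payoff A (pvec i0) ys :=
      hsx (pvec i0) (pvec_mem i0) (fun h => hne h.symm)
    have h2 : payoff A (pvec i0) ys ≤ payoff A xs ys := by
      rw [payoff_pvec_left, payoff_left]
      calc (∑ j, A i0 j * ys j) = ∑ i, xs i * (∑ j, A i0 j * ys j) := by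
            rw [← Finset.sum_mul, hxs.2, one_mul]
        _ ≤ ∑ i, xs i * (∑ j, A i j * ys j) :=
            Finset.sum_le_sum fun i _ => mul_le_mul_of_nonneg_left (hi0 i (Finset.mem_univ i)) (hxs.1 i)
    exact absurd h2 (not_le.2 h1)
  have hyeq : ys = pvec j0 := by
    by_contra hne
    have h1 : payoff A xs (pvec j0) < payoff A xs ys :=
      hsy (pvec j0) (pvec_mem j0) (fun h => hne h.symm)
    have h2 : payoff A xs ys ≤ payoff A xs (pvec j0) := by
      rw [payoff_pvec_right, payoff_right]
      calc (∑ j, (∑ i, A i j * xs i) * ys j) ≤ ∑ j, (∑ i, A i j0 * xs i) * ys j :=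
            Finset.sum_le_sum fun j _ => mul_le_mul_of_nonneg_right (hj0 j (Finset.mem_univ j)) (hys.1 j)
        _ = ∑ i, A i j0 * xs i := by rw [← Finset.mul_sum, hys.2, mul_one]
    exact absurd h2 (not_le.2 h1)
  refine ⟨i0, j0, hxeq, hyeq, ?_, ?_⟩
  · intro i hi
    have hne : pvec i ≠ xs := by
      intro h
      have : (pvec i : Vec d1) i = xs i := by rw [h]
      rw [hxeq] at this
      simp [pvec, hi] at this
    have := hsx (pvec i) (pvec_mem i) hne
    rwa [hxeq, hyeq, payoff_pvec_pvec, payoff_pvec_pvec] at this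
  · intro j hj
    have hne : pvec j ≠ ys := by
      intro h
      have : (pvec j : Vec d2) j = ys j := by rw [h]
      rw [hyeq] at this
      simp [pvec, hj] at this
    have := hsy (pvec j) (pvec_mem j) hne
    rwa [hxeq, hyeq, payoff_pvec_pvec, payoff_pvec_pvec] at this


set_option maxHeartbeats 1000000 in
lemma main_abs {d1 d2 : ℕ} (hd1 : 1 ≤ d1) (hd2 : 1 ≤ d2)
    (A : Matrix (Fin d1) (Fin d2) ℝ) (i0 : Fin d1) (j0 : Fin d2)
    (hgapx : ∀ i, i ≠ i0 → A i0 j0 < A i j0) (hgapy : ∀ j, j ≠ j0 → A i0 j < A i0 j0)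
    (Rx : ℕ → Vec d1) (Ry : ℕ → Vec d2) (x : ℕ → Vec d1) (y : ℕ → Vec d2)
    (hRx0 : Rx 0 = 0) (hRy0 : Ry 0 = 0)
    (hx0 : x 0 ∈ simplexSet d1) (hy0 : y 0 ∈ simplexSet d2)
    (hRxU : ∀ t i, Rx (t + 1) i =
      max (Rx t i - ((∑ j, A i j * y t j) - payoff A (x t) (y t))) 0)
    (hRyU : ∀ t j, Ry (t + 1) j =
      max (Ry t j + ((∑ i, A i j * x t i) - payoff A (x t) (y t))) 0)
    (hxU : ∀ t, x (t + 1) = normPart0 (Rx (t + 1)))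
    (hyU : ∀ t, y (t + 1) = normPart0 (Ry (t + 1))) :
    ∃ T1 : ℕ, ∀ t, T1 ≤ t → x t = pvec i0 ∧ y t = pvec j0 := by
  -- constants
  set α : ℝ := ∑ i, ∑ j, |A i j| with hαdef
  have hα : 0 ≤ α := Finset.sum_nonneg fun i _ => Finset.sum_nonneg fun j _ => abs_nonneg _
  have habsA : ∀ i j, |A i j| ≤ α := by
    intro i j
    calc |A i j| ≤ ∑ j', |A i j'| :=
          Finset.single_le_sum (f := fun j' => |A i j'|) (fun j' _ => abs_nonneg _) (Finset.mem_univ j)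
      _ ≤ α := Finset.single_le_sum (f := fun i' => ∑ j', |A i' j'|)
          (fun i' _ => Finset.sum_nonneg fun j' _ => abs_nonneg _) (Finset.mem_univ i)
  set A1 : ℝ := α + 1 with hA1def
  have hA1 : 1 ≤ A1 := by simp only [hA1def]; linarith
  have hne1 : (Finset.univ : Finset (Fin d1)).Nonempty := ⟨i0, Finset.mem_univ i0⟩
  have hne2 : (Finset.univ : Finset (Fin d2)).Nonempty := ⟨j0, Finset.mem_univ j0⟩
  set δx : ℝ := Finset.univ.inf' hne1 (fun i => if i = i0 then 1 else A i j0 - A i0 j0) with hδxdef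
  set δy : ℝ := Finset.univ.inf' hne2 (fun j => if j = j0 then 1 else A i0 j0 - A i0 j) with hδydef
  set δ : ℝ := min δx δy with hδdef
  have hδxpos : 0 < δx := by
    rw [hδxdef, Finset.lt_inf'_iff]
    intro i _
    by_cases h : i = i0
    · rw [if_pos h]; norm_num
    · rw [if_neg h]; have := hgapx i h; linarith
  have hδypos : 0 < δy := by
    rw [hδydef, Finset.lt_inf'_iff]
    intro j _
    by_cases h : j = j0
    · rw [if_pos h]; norm_num
    · rw [if_neg h]; have := hgapy j h; linarith
  have hδpos : 0 < δ := lt_min hδxpos hδypos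
  have hδ1 : δ ≤ 1 := by
    have h1 : δx ≤ 1 := by
      have := Finset.inf'_le (fun i => if i = i0 then (1:ℝ) else A i j0 - A i0 j0) (Finset.mem_univ i0)
      rwa [if_pos rfl] at this
    calc δ ≤ δx := min_le_left _ _
      _ ≤ 1 := h1
  have hδgx : ∀ i, i ≠ i0 → δ ≤ A i j0 - A i0 j0 := by
    intro i hi
    have h1 : δx ≤ A i j0 - A i0 j0 := by
      have := Finset.inf'_le (fun i => if i = i0 then (1:ℝ) else A i j0 - A i0 j0) (Finset.mem_univ i)
      rwa [if_neg hi] at this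
    calc δ ≤ δx := min_le_left _ _
      _ ≤ _ := h1
  have hδgy : ∀ j, j ≠ j0 → δ ≤ A i0 j0 - A i0 j := by
    intro j hj
    have h1 : δy ≤ A i0 j0 - A i0 j := by
      have := Finset.inf'_le (fun j => if j = j0 then (1:ℝ) else A i0 j0 - A i0 j) (Finset.mem_univ j)
      rwa [if_neg hj] at this
    calc δ ≤ δy := min_le_right _ _
      _ ≤ _ := h1
  set ε : ℝ := δ / (12 * A1) with hεdef
  have hεpos : 0 < ε := by
    rw [hεdef]; apply div_pos hδpos; linarith
  have hε14 : ε ≤ 1/4 := by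
    rw [hεdef]
    calc δ / (12 * A1) ≤ 1 / 12 := by
          apply div_le_div₀ (by norm_num) hδ1 (by norm_num) (by linarith)
      _ ≤ 1/4 := by norm_num
  have hεle : 6 * α * ε ≤ δ / 2 := by
    rw [hεdef, show 6*α*(δ/(12*A1)) = (6*α*δ)/(12*A1) from by ring,
      div_le_div_iff₀ (by linarith) (by norm_num)]
    nlinarith
  -- basic dynamics facts
  have hRxnn : ∀ t i, 0 ≤ Rx t i := by
    intro t i
    cases t with
    | zero => rw [hRx0]; exact le_of_eq rfl
    | succ u => rw [hRxU u i]; exact le_max_right _ _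
  have hRynn : ∀ t j, 0 ≤ Ry t j := by
    intro t j
    cases t with
    | zero => rw [hRy0]; exact le_of_eq rfl
    | succ u => rw [hRyU u j]; exact le_max_right _ _
  have hxsimp : ∀ t, x t ∈ simplexSet d1 := by
    intro t
    cases t with
    | zero => exact hx0
    | succ u => rw [hxU u]; exact normPart0_mem hd1 _ (fun i => hRxnn (u+1) i)
  have hysimp : ∀ t, y t ∈ simplexSet d2 := by
    intro t
    cases t with
    | zero => exact hy0
    | succ u => rw [hyU u]; exact normPart0_mem hd2 _ (fun j => hRynn (u+1) j)
  have hxnorm : ∀ t, 1 ≤ t → x t = normPart0 (Rx t) := by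
    intro t ht
    cases t with
    | zero => omega
    | succ u => exact hxU u
  have hynorm : ∀ t, 1 ≤ t → y t = normPart0 (Ry t) := by
    intro t ht
    cases t with
    | zero => omega
    | succ u => exact hyU u
  -- increments
  set gx : ℕ → Fin d1 → ℝ :=
    fun t i => payoff A (x t) (y t) - ∑ j, A i j * y t j with hgxd
  set gy : ℕ → Fin d2 → ℝ :=
    fun t j => (∑ i, A i j * x t i) - payoff A (x t) (y t) with hgyd
  have hRxU' : ∀ t i, Rx (t+1) i = max (Rx t i + gx t i) 0 := by
    intro t i; rw [hRxU t i]; congr 1; simp only [hgxd]; ring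
  have hRyU' : ∀ t j, Ry (t+1) j = max (Ry t j + gy t j) 0 := by
    intro t j; rw [hRyU t j]
  have hgxb : ∀ t i, |gx t i| ≤ 2 * A1 := by
    intro t i
    simp only [hgxd]
    calc |payoff A (x t) (y t) - ∑ j, A i j * y t j|
        ≤ |payoff A (x t) (y t)| + |∑ j, A i j * y t j| := abs_sub _ _
      _ ≤ 2 * A1 := by
          have h1 := payoff_abs_le A α habsA (x t) (y t) (hxsimp t) (hysimp t)
          have h2 := row_abs_le A α habsA i (y t) (hysimp t)
          simp only [hA1def]; linarith
  have hgyb : ∀ t j, |gy t j| ≤ 2 * A1 := by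
    intro t j
    simp only [hgyd]
    calc |(∑ i, A i j * x t i) - payoff A (x t) (y t)|
        ≤ |∑ i, A i j * x t i| + |payoff A (x t) (y t)| := abs_sub _ _
      _ ≤ 2 * A1 := by
          have h1 := payoff_abs_le A α habsA (x t) (y t) (hxsimp t) (hysimp t)
          have h2 := col_abs_le A α habsA j (x t) (hxsimp t)
          simp only [hA1def]; linarith
  have hcumx : ∀ T i, (∑ t ∈ Finset.range T, gx t i) ≤ Rx T i := by
    intro T i
    induction T with
    | zero => rw [Finset.range_zero, Finset.sum_empty, hRx0]; exact le_of_eq rfl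
    | succ T ih =>
        rw [Finset.sum_range_succ, hRxU' T i]
        exact le_trans (by linarith) (le_max_left _ _)
  have hcumy : ∀ T j, (∑ t ∈ Finset.range T, gy t j) ≤ Ry T j := by
    intro T j
    induction T with
    | zero => rw [Finset.range_zero, Finset.sum_empty, hRy0]; exact le_of_eq rfl
    | succ T ih =>
        rw [Finset.sum_range_succ, hRyU' T j]
        exact le_trans (by linarith) (le_max_left _ _)
  -- potential function
  set Phi : ℕ → ℝ := fun T => (∑ i, (Rx T i)^2) + (∑ j, (Ry T j)^2) with hPhid
  have hsq_max : ∀ a : ℝ, (max a 0)^2 ≤ a^2 := by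
    intro a
    rcases le_total a 0 with h | h
    · rw [max_eq_right h]; simpa using sq_nonneg a
    · rw [max_eq_left h]
  have hcrossx : ∀ T, (∑ i, Rx T i * gx T i) = 0 := by
    intro T
    cases T with
    | zero =>
        apply Finset.sum_eq_zero; intro i _
        rw [hRx0]; exact zero_mul _
    | succ u =>
        by_cases h : (∑ i, |Rx (u+1) i|) = 0
        · apply Finset.sum_eq_zero; intro i _
          have h1 : |Rx (u+1) i| = 0 :=
            (Finset.sum_eq_zero_iff_of_nonneg (fun i _ => abs_nonneg _)).1 h i (Finset.mem_univ i)
          rw [abs_eq_zero.1 h1, zero_mul]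
        · have hxu : ∀ i, x (u+1) i = (∑ i', |Rx (u+1) i'|)⁻¹ * Rx (u+1) i := by
            intro i; rw [hxU u]; exact normPart0_apply _ h i
          have hRxi : ∀ i, Rx (u+1) i = (∑ i', |Rx (u+1) i'|) * x (u+1) i := by
            intro i; rw [hxu i, ← mul_assoc, mul_inv_cancel₀ h, one_mul]
          have hzero : (∑ i, x (u+1) i * gx (u+1) i) = 0 := by
            simp only [hgxd]
            simp only [mul_sub]
            rw [Finset.sum_sub_distrib, ← Finset.sum_mul, (hxsimp (u+1)).2, one_mul,
              payoff_left A (x (u+1)) (y (u+1)), sub_self]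
          calc (∑ i, Rx (u+1) i * gx (u+1) i)
              = ∑ i, (∑ i', |Rx (u+1) i'|) * (x (u+1) i * gx (u+1) i) := by
                apply Finset.sum_congr rfl; intro i _
                rw [hRxi i, mul_assoc]
            _ = (∑ i', |Rx (u+1) i'|) * ∑ i, x (u+1) i * gx (u+1) i :=
                (Finset.mul_sum _ _ _).symm
            _ = 0 := by rw [hzero, mul_zero]
  have hcrossy : ∀ T, (∑ j, Ry T j * gy T j) = 0 := by
    intro T
    cases T with
    | zero =>
        apply Finset.sum_eq_zero; intro j _
        rw [hRy0]; exact zero_mul _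
    | succ u =>
        by_cases h : (∑ j, |Ry (u+1) j|) = 0
        · apply Finset.sum_eq_zero; intro j _
          have h1 : |Ry (u+1) j| = 0 :=
            (Finset.sum_eq_zero_iff_of_nonneg (fun j _ => abs_nonneg _)).1 h j (Finset.mem_univ j)
          rw [abs_eq_zero.1 h1, zero_mul]
        · have hyu : ∀ j, y (u+1) j = (∑ j', |Ry (u+1) j'|)⁻¹ * Ry (u+1) j := by
            intro j; rw [hyU u]; exact normPart0_apply _ h j
          have hRyj : ∀ j, Ry (u+1) j = (∑ j', |Ry (u+1) j'|) * y (u+1) j := by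
            intro j; rw [hyu j, ← mul_assoc, mul_inv_cancel₀ h, one_mul]
          have hpr : payoff A (x (u+1)) (y (u+1))
              = ∑ j, y (u+1) j * (∑ i, A i j * x (u+1) i) := by
            rw [payoff_right]
            apply Finset.sum_congr rfl; intro j _; ring
          have hzero : (∑ j, y (u+1) j * gy (u+1) j) = 0 := by
            simp only [hgyd]
            simp only [mul_sub]
            rw [Finset.sum_sub_distrib, ← Finset.sum_mul, (hysimp (u+1)).2, one_mul, ← hpr,
              sub_self]
          calc (∑ j, Ry (u+1) j * gy (u+1) j)
              = ∑ j, (∑ j', |Ry (u+1) j'|) * (y (u+1) j * gy (u+1) j) := by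
                apply Finset.sum_congr rfl; intro j _
                rw [hRyj j, mul_assoc]
            _ = (∑ j', |Ry (u+1) j'|) * ∑ j, y (u+1) j * gy (u+1) j :=
                (Finset.mul_sum _ _ _).symm
            _ = 0 := by rw [hzero, mul_zero]
  set C1 : ℝ := ((d1:ℝ) + (d2:ℝ)) * (2*A1)^2 with hC1def
  have hC1nn : 0 ≤ C1 := by rw [hC1def]; positivity
  have hPhiStep : ∀ T, Phi (T+1) ≤ Phi T + C1 := by
    intro T
    have hbx : (∑ i, (Rx (T+1) i)^2)
        ≤ (∑ i, (Rx T i)^2) + (2*(∑ i, Rx T i * gx T i) + ∑ i, (gx T i)^2) := by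
      calc (∑ i, (Rx (T+1) i)^2) = ∑ i, (max (Rx T i + gx T i) 0)^2 := by
            apply Finset.sum_congr rfl; intro i _; rw [hRxU' T i]
        _ ≤ ∑ i, (Rx T i + gx T i)^2 := Finset.sum_le_sum fun i _ => hsq_max _
        _ = ∑ i, ((Rx T i)^2 + (2*(Rx T i * gx T i) + (gx T i)^2)) := by
            apply Finset.sum_congr rfl; intro i _; ring
        _ = (∑ i, (Rx T i)^2) + (2*(∑ i, Rx T i * gx T i) + ∑ i, (gx T i)^2) := by
            rw [Finset.sum_add_distrib, Finset.sum_add_distrib, ← Finset.mul_sum]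
    have hby : (∑ j, (Ry (T+1) j)^2)
        ≤ (∑ j, (Ry T j)^2) + (2*(∑ j, Ry T j * gy T j) + ∑ j, (gy T j)^2) := by
      calc (∑ j, (Ry (T+1) j)^2) = ∑ j, (max (Ry T j + gy T j) 0)^2 := by
            apply Finset.sum_congr rfl; intro j _; rw [hRyU' T j]
        _ ≤ ∑ j, (Ry T j + gy T j)^2 := Finset.sum_le_sum fun j _ => hsq_max _
        _ = ∑ j, ((Ry T j)^2 + (2*(Ry T j * gy T j) + (gy T j)^2)) := by
            apply Finset.sum_congr rfl; intro j _; ring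
        _ = (∑ j, (Ry T j)^2) + (2*(∑ j, Ry T j * gy T j) + ∑ j, (gy T j)^2) := by
            rw [Finset.sum_add_distrib, Finset.sum_add_distrib, ← Finset.mul_sum]
    have hgx2 : (∑ i, (gx T i)^2) ≤ (d1:ℝ) * (2*A1)^2 := by
      calc (∑ i, (gx T i)^2) ≤ ∑ _i : Fin d1, (2*A1)^2 := by
            apply Finset.sum_le_sum
            intro i _
            have h := hgxb T i
            have h1 := abs_le.1 h
            exact sq_le_sq' (by linarith [h1.1]) h1.2
        _ = (d1:ℝ) * (2*A1)^2 := by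
            rw [Finset.sum_const, Finset.card_univ, Fintype.card_fin, nsmul_eq_mul]
    have hgy2 : (∑ j, (gy T j)^2) ≤ (d2:ℝ) * (2*A1)^2 := by
      calc (∑ j, (gy T j)^2) ≤ ∑ _j : Fin d2, (2*A1)^2 := by
            apply Finset.sum_le_sum
            intro j _
            have h := hgyb T j
            have h1 := abs_le.1 h
            exact sq_le_sq' (by linarith [h1.1]) h1.2
        _ = (d2:ℝ) * (2*A1)^2 := by
            rw [Finset.sum_const, Finset.card_univ, Fintype.card_fin, nsmul_eq_mul]
    have e1 := hcrossx T
    have e2 := hcrossy T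
    simp only [hPhid, hC1def]
    rw [e1] at hbx
    rw [e2] at hby
    have : ((d1:ℝ) + (d2:ℝ)) * (2*A1)^2 = (d1:ℝ)*(2*A1)^2 + (d2:ℝ)*(2*A1)^2 := by ring
    rw [this]
    linarith
  have hPhi : ∀ T, Phi T ≤ (T:ℝ) * C1 := by
    intro T
    induction T with
    | zero =>
        have z1 : (∑ i, (Rx 0 i)^2) = 0 :=
          Finset.sum_eq_zero fun i _ => by rw [hRx0]; exact zero_pow (by norm_num)
        have z2 : (∑ j, (Ry 0 j)^2) = 0 :=
          Finset.sum_eq_zero fun j _ => by rw [hRy0]; exact zero_pow (by norm_num)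
        simp only [hPhid]
        rw [z1, z2]
        norm_num
    | succ T ih =>
        have h := hPhiStep T
        push_cast
        have : ((T:ℝ) + 1) * C1 = (T:ℝ) * C1 + C1 := by ring
        rw [this]
        linarith
  have hanchorx : ∀ T i, Rx T i ≤ Real.sqrt ((T:ℝ) * C1) := by
    intro T i
    have h1 : (Rx T i)^2 ≤ Phi T := by
      simp only [hPhid]
      have h2 : (Rx T i)^2 ≤ ∑ i', (Rx T i')^2 :=
        Finset.single_le_sum (f := fun i' => (Rx T i')^2) (fun i' _ => sq_nonneg _)
          (Finset.mem_univ i)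
      have h3 : 0 ≤ ∑ j, (Ry T j)^2 := Finset.sum_nonneg fun j _ => sq_nonneg _
      linarith
    have h4 := Real.sqrt_le_sqrt (h1.trans (hPhi T))
    rwa [Real.sqrt_sq (hRxnn T i)] at h4
  have hanchory : ∀ T j, Ry T j ≤ Real.sqrt ((T:ℝ) * C1) := by
    intro T j
    have h1 : (Ry T j)^2 ≤ Phi T := by
      simp only [hPhid]
      have h2 : (Ry T j)^2 ≤ ∑ j', (Ry T j')^2 :=
        Finset.single_le_sum (f := fun j' => (Ry T j')^2) (fun j' _ => sq_nonneg _)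
          (Finset.mem_univ j)
      have h3 : 0 ≤ ∑ i, (Rx T i)^2 := Finset.sum_nonneg fun i _ => sq_nonneg _
      linarith
    have h4 := Real.sqrt_le_sqrt (h1.trans (hPhi T))
    rwa [Real.sqrt_sq (hRynn T j)] at h4
  -- entry into the good region
  set sxf : ℕ → ℝ := fun t => ∑ i ∈ Finset.univ.erase i0, x t i with hsxfd
  set syf : ℕ → ℝ := fun t => ∑ j ∈ Finset.univ.erase j0, y t j with hsyfd
  have hsxnn : ∀ t, 0 ≤ sxf t := by
    intro t; simp only [hsxfd]
    exact Finset.sum_nonneg fun i _ => (hxsimp t).1 i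
  have hsynn : ∀ t, 0 ≤ syf t := by
    intro t; simp only [hsyfd]
    exact Finset.sum_nonneg fun j _ => (hysimp t).1 j
  have hkey : ∀ t, δ * (sxf t + syf t) ≤ gx t i0 + gy t j0 := by
    intro t
    have e0 : gx t i0 + gy t j0 = (∑ i, A i j0 * x t i) - (∑ j, A i0 j * y t j) := by
      simp only [hgxd, hgyd]; ring
    have e1 : (∑ i, A i j0 * x t i) - A i0 j0
        = ∑ i ∈ Finset.univ.erase i0, (A i j0 - A i0 j0) * x t i := by
      have h1 : ∑ i, (A i j0 - A i0 j0) * x t i = (∑ i, A i j0 * x t i) - A i0 j0 := by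
        simp only [sub_mul]
        rw [Finset.sum_sub_distrib, ← Finset.mul_sum, (hxsimp t).2, mul_one]
      have h2 : (A i0 j0 - A i0 j0) * x t i0
          + ∑ i ∈ Finset.univ.erase i0, (A i j0 - A i0 j0) * x t i
          = ∑ i, (A i j0 - A i0 j0) * x t i :=
        Finset.add_sum_erase _ (fun i => (A i j0 - A i0 j0) * x t i) (Finset.mem_univ i0)
      rw [← h1, ← h2, sub_self, zero_mul, zero_add]
    have e2 : A i0 j0 - (∑ j, A i0 j * y t j)
        = ∑ j ∈ Finset.univ.erase j0, (A i0 j0 - A i0 j) * y t j := by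
      have h1 : ∑ j, (A i0 j0 - A i0 j) * y t j = A i0 j0 - (∑ j, A i0 j * y t j) := by
        simp only [sub_mul]
        rw [Finset.sum_sub_distrib, ← Finset.mul_sum, (hysimp t).2, mul_one]
      have h2 : (A i0 j0 - A i0 j0) * y t j0
          + ∑ j ∈ Finset.univ.erase j0, (A i0 j0 - A i0 j) * y t j
          = ∑ j, (A i0 j0 - A i0 j) * y t j :=
        Finset.add_sum_erase _ (fun j => (A i0 j0 - A i0 j) * y t j) (Finset.mem_univ j0)
      rw [← h1, ← h2, sub_self, zero_mul, zero_add]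
    have ineq1 : δ * sxf t ≤ ∑ i ∈ Finset.univ.erase i0, (A i j0 - A i0 j0) * x t i := by
      simp only [hsxfd]
      rw [Finset.mul_sum]
      apply Finset.sum_le_sum
      intro i hi
      exact mul_le_mul_of_nonneg_right (hδgx i (Finset.mem_erase.1 hi).1) ((hxsimp t).1 i)
    have ineq2 : δ * syf t ≤ ∑ j ∈ Finset.univ.erase j0, (A i0 j0 - A i0 j) * y t j := by
      simp only [hsyfd]
      rw [Finset.mul_sum]
      apply Finset.sum_le_sum
      intro j hj
      exact mul_le_mul_of_nonneg_right (hδgy j (Finset.mem_erase.1 hj).1) ((hysimp t).1 j)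
    rw [e0]
    have := e1
    have := e2
    nlinarith [ineq1, ineq2, e1, e2]
  have hsumbound : ∀ T : ℕ, δ * (∑ t ∈ Finset.range T, (sxf t + syf t))
      ≤ 2 * Real.sqrt ((T:ℝ) * C1) := by
    intro T
    calc δ * (∑ t ∈ Finset.range T, (sxf t + syf t))
        = ∑ t ∈ Finset.range T, δ * (sxf t + syf t) := Finset.mul_sum _ _ _
      _ ≤ ∑ t ∈ Finset.range T, (gx t i0 + gy t j0) :=
          Finset.sum_le_sum fun t _ => hkey t
      _ = (∑ t ∈ Finset.range T, gx t i0) + (∑ t ∈ Finset.range T, gy t j0) :=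
          Finset.sum_add_distrib
      _ ≤ Rx T i0 + Ry T j0 := add_le_add (hcumx T i0) (hcumy T j0)
      _ ≤ 2 * Real.sqrt ((T:ℝ) * C1) := by
          have h1 := hanchorx T i0
          have h2 := hanchory T j0
          linarith
  have hentry : ∃ t0, 1 ≤ t0 ∧ sxf t0 ≤ ε ∧ syf t0 ≤ ε := by
    by_contra hcon
    push_neg at hcon
    have hlow : ∀ t, 1 ≤ t → ε ≤ sxf t + syf t := by
      intro t ht
      by_cases hp : sxf t ≤ ε
      · have := hcon t ht hp
        have := hsxnn t
        linarith
      · push_neg at hp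
        have := hsynn t
        linarith
    have hTbound : ∀ T : ℕ, 1 ≤ T → δ * (ε * ((T:ℝ) - 1)) ≤ 2 * Real.sqrt ((T:ℝ) * C1) := by
      intro T hT
      have h1 : ∑ t ∈ Finset.Ico 1 T, (sxf t + syf t) ≤ ∑ t ∈ Finset.range T, (sxf t + syf t) := by
        apply Finset.sum_le_sum_of_subset_of_nonneg
        · intro t ht; simp at ht ⊢; omega
        · intro t _ _; have := hsxnn t; have := hsynn t; linarith
      have h2 : ∑ t ∈ Finset.Ico 1 T, ε ≤ ∑ t ∈ Finset.Ico 1 T, (sxf t + syf t) :=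
        Finset.sum_le_sum fun t ht => hlow t (Finset.mem_Ico.1 ht).1
      have h3 : ∑ t ∈ Finset.Ico 1 T, ε = ((T:ℝ) - 1) * ε := by
        rw [Finset.sum_const, Nat.card_Ico, nsmul_eq_mul, Nat.cast_sub hT]
        push_cast; ring
      have h4 : ε * ((T:ℝ) - 1) ≤ ∑ t ∈ Finset.range T, (sxf t + syf t) := by
        rw [h3] at h2; linarith
      have h5 := mul_le_mul_of_nonneg_left h4 hδpos.le
      exact le_trans h5 (hsumbound T)
    set n : ℕ := ⌈(2 * Real.sqrt C1) / (δ*ε)⌉₊ with hndef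
    have hT1 : 1 ≤ (n+2)^2 := Nat.one_le_iff_ne_zero.2 (pow_ne_zero _ (by omega))
    have hTb := hTbound ((n+2)^2) hT1
    have hsqrtT : Real.sqrt ((((n+2)^2 : ℕ):ℝ) * C1) = ((n:ℝ)+2) * Real.sqrt C1 := by
      push_cast
      rw [Real.sqrt_mul (by positivity), Real.sqrt_sq (by positivity)]
    rw [hsqrtT] at hTb
    have hnceil : (2 * Real.sqrt C1) / (δ*ε) ≤ (n:ℝ) := Nat.le_ceil _
    have hde : (0:ℝ) < δ*ε := mul_pos hδpos hεpos
    have hn2 : 2 * Real.sqrt C1 ≤ (n:ℝ) * (δ*ε) := by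
      rw [div_le_iff₀ hde] at hnceil; linarith
    have hcast : (((n+2)^2 : ℕ):ℝ) = ((n:ℝ)+2)^2 := by push_cast; ring
    rw [hcast] at hTb
    have hn0 : (0:ℝ) ≤ (n:ℝ) := Nat.cast_nonneg n
    nlinarith [mul_le_mul_of_nonneg_right hn2 (show (0:ℝ) ≤ (n:ℝ)+2 by linarith)]
  obtain ⟨t0, ht01, hgx0, hgy0⟩ := hentry
  -- forward invariance from time t0
  have hInv : ∀ k : ℕ, (sxf (t0+k) ≤ ε) ∧ (syf (t0+k) ≤ ε) ∧
      (Rx t0 i0 ≤ Rx (t0+k) i0) ∧ (Ry t0 j0 ≤ Ry (t0+k) j0) ∧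
      (∀ i, i ≠ i0 → Rx (t0+k) i ≤ max (Rx t0 i - (k:ℝ)*(δ/2)) 0) ∧
      (∀ j, j ≠ j0 → Ry (t0+k) j ≤ max (Ry t0 j - (k:ℝ)*(δ/2)) 0) := by
    intro k
    induction k with
    | zero =>
        refine ⟨hgx0, hgy0, le_refl _, le_refl _, ?_, ?_⟩
        · intro i _
          simpa using le_max_left (Rx t0 i) 0
        · intro j _
          simpa using le_max_left (Ry t0 j) 0
    | succ k ih =>
        obtain ⟨ih1, ih2, ih3, ih4, ih5, ih6⟩ := ih
        have ht : 1 ≤ t0 + k := le_trans ht01 (Nat.le_add_right _ _)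
        have hst := step A i0 j0 α δ ε hα habsA hδpos hδgx hδgy hεpos hε14 hεle
          (Rx (t0+k)) (Rx (t0+k+1)) (x (t0+k)) (x (t0+k+1))
          (Ry (t0+k)) (Ry (t0+k+1)) (y (t0+k)) (y (t0+k+1))
          (hRxnn (t0+k)) (hRynn (t0+k)) (hxnorm (t0+k) ht) (hynorm (t0+k) ht)
          (fun i => hRxU (t0+k) i) (fun j => hRyU (t0+k) j)
          (hxU (t0+k)) (hyU (t0+k)) ih1 ih2
        obtain ⟨s1, s2, s3, s4, s5, s6⟩ := hst
        have he : t0 + (k+1) = (t0+k)+1 := rfl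
        refine ⟨?_, ?_, ?_, ?_, ?_, ?_⟩
        · rw [he]; exact le_trans s1 ih1
        · rw [he]; exact le_trans s2 ih2
        · rw [he]; exact le_trans ih3 s3
        · rw [he]; exact le_trans ih4 s4
        · intro i hi
          rw [he]
          have h5 := s5 i hi
          have h6 : max (Rx (t0+k) i - δ/2) 0 ≤ max (max (Rx t0 i - (k:ℝ)*(δ/2)) 0 - δ/2) 0 :=
            max_le_max (sub_le_sub_right (ih5 i hi) (δ/2)) le_rfl
          have h7 := max_sub_max (Rx t0 i - (k:ℝ)*(δ/2)) (δ/2) (by linarith)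
          have h8 : Rx t0 i - (k:ℝ)*(δ/2) - δ/2 = Rx t0 i - ((k:ℕ)+1:ℝ)*(δ/2) := by
            push_cast; ring
          rw [h8] at h7
          refine le_trans h5 (le_trans h6 (le_trans h7 (le_of_eq ?_)))
          congr 2
          push_cast; ring
        · intro j hj
          rw [he]
          have h5 := s6 j hj
          have h6 : max (Ry (t0+k) j - δ/2) 0 ≤ max (max (Ry t0 j - (k:ℝ)*(δ/2)) 0 - δ/2) 0 :=
            max_le_max (sub_le_sub_right (ih6 j hj) (δ/2)) le_rfl
          have h7 := max_sub_max (Ry t0 j - (k:ℝ)*(δ/2)) (δ/2) (by linarith)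
          have h8 : Ry t0 j - (k:ℝ)*(δ/2) - δ/2 = Ry t0 j - ((k:ℕ)+1:ℝ)*(δ/2) := by
            push_cast; ring
          rw [h8] at h7
          refine le_trans h5 (le_trans h6 (le_trans h7 (le_of_eq ?_)))
          congr 2
          push_cast; ring
  -- after enough steps all non-anchor regrets vanish
  set Mb : ℝ := Real.sqrt ((t0:ℝ) * C1) with hMbdef
  have hMbnn : 0 ≤ Mb := Real.sqrt_nonneg _
  set k0 : ℕ := ⌈Mb/(δ/2)⌉₊ + 1 with hk0def
  have hkbig : ∀ k : ℕ, k0 ≤ k → Mb + δ/2 ≤ (k:ℝ)*(δ/2) := by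
    intro k hk
    have h1 : Mb/(δ/2) ≤ (⌈Mb/(δ/2)⌉₊:ℝ) := Nat.le_ceil _
    have hhalf : (0:ℝ) < δ/2 := by linarith
    have h2 : Mb ≤ (⌈Mb/(δ/2)⌉₊:ℝ)*(δ/2) := by
      rw [div_le_iff₀ hhalf] at h1; linarith
    have h3 : ((k0:ℕ):ℝ) ≤ (k:ℝ) := by exact_mod_cast hk
    rw [hk0def] at h3
    push_cast at h3
    nlinarith
  have hzero : ∀ k : ℕ, k0 ≤ k →
      (∀ i, i ≠ i0 → Rx (t0+k) i = 0) ∧ (∀ j, j ≠ j0 → Ry (t0+k) j = 0) := by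
    intro k hk
    have hkk := hkbig k hk
    constructor
    · intro i hi
      have h1 := (hInv k).2.2.2.2.1 i hi
      have h2 : Rx t0 i ≤ Mb := hanchorx t0 i
      have h4 : max (Rx t0 i - (k:ℝ)*(δ/2)) 0 = 0 := max_eq_right (by linarith)
      rw [h4] at h1
      exact le_antisymm h1 (hRxnn (t0+k) i)
    · intro j hj
      have h1 := (hInv k).2.2.2.2.2 j hj
      have h2 : Ry t0 j ≤ Mb := hanchory t0 j
      have h4 : max (Ry t0 j - (k:ℝ)*(δ/2)) 0 = 0 := max_eq_right (by linarith)
      rw [h4] at h1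
      exact le_antisymm h1 (hRynn (t0+k) j)
  refine ⟨t0 + k0, ?_⟩
  intro t htT
  have hte : t = t0 + (t - t0) := by omega
  have hkge : k0 ≤ t - t0 := by omega
  obtain ⟨hz1, hz2⟩ := hzero (t - t0) hkge
  have ht1 : 1 ≤ t0 + (t - t0) := by omega
  constructor
  · rw [hte]
    apply norm_block_pure i0 (Rx (t0 + (t - t0))) (x (t0 + (t - t0)))
      (hRxnn _) (hxnorm _ ht1) _ hz1
    intro hE
    have h0 : 0 < Rx t0 i0 := by
      apply anchor_pos i0 ε hε14 (Rx t0) (x t0) (hRxnn t0) (hxnorm t0 ht01) _ hE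
      exact hgx0
    exact lt_of_lt_of_le h0 (hInv (t - t0)).2.2.1
  · rw [hte]
    apply norm_block_pure j0 (Ry (t0 + (t - t0))) (y (t0 + (t - t0)))
      (hRynn _) (hynorm _ ht1) _ hz2
    intro hE
    have h0 : 0 < Ry t0 j0 := by
      apply anchor_pos j0 ε hε14 (Ry t0) (y t0) (hRynn t0) (hynorm t0 ht01) _ hE
      exact hgy0
    exact lt_of_lt_of_le h0 (hInv (t - t0)).2.2.2.1
end RMaux

/-- If the matrix game has a strict Nash equilibrium (x*, y*), then the
RM⁺ iterates (xᵗ, yᵗ) converge to (x*, y*). -/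
theorem rmp_convergence_to_strict_NE {d1 d2 : ℕ} (hd1 : 1 ≤ d1) (hd2 : 1 ≤ d2)
    (A : Matrix (Fin d1) (Fin d2) ℝ) (xs : Vec d1) (ys : Vec d2)
    (hstrict : IsStrictNash A xs ys)
    (Rx : ℕ → Vec d1) (Ry : ℕ → Vec d2) (x : ℕ → Vec d1) (y : ℕ → Vec d2)
    (hRM : RMplus A Rx Ry x y) :
    Tendsto x atTop (𝓝 xs) ∧ Tendsto y atTop (𝓝 ys) := by
  obtain ⟨hNash, hsx, hsy⟩ := hstrict
  obtain ⟨hxs, hys, -⟩ := hNash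
  obtain ⟨i0, j0, hxe, hye, hgapx, hgapy⟩ :=
    RMaux.strict_pure hd1 hd2 A xs ys hxs hys hsx hsy
  obtain ⟨hRx0, hRy0, hx0, hy0, hRxU, hRyU, hxU, hyU⟩ := hRM
  obtain ⟨T1, hT1⟩ := RMaux.main_abs hd1 hd2 A i0 j0 hgapx hgapy Rx Ry x y
    hRx0 hRy0 hx0 hy0 hRxU hRyU hxU hyU
  constructor
  · have hev : ∀ᶠ t in atTop, x t = xs :=
      eventually_atTop.2 ⟨T1, fun t ht => by rw [(hT1 t ht).1, hxe]⟩
    exact Tendsto.congr' (hev.mono fun t h => h.symm) tendsto_const_nhds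
  · have hev : ∀ᶠ t in atTop, y t = ys :=
      eventually_atTop.2 ⟨T1, fun t ht => by rw [(hT1 t ht).2, hye]⟩
    exact Tendsto.congr' (hev.mono fun t h => h.symm) tendsto_const_nhds

end
end

section
/- Let {z^t} be the sequence produced by ExRM+ with stepsize η ∈ (0, 1/L_F), and let z* ∈ Z be any Nash equilibrium of the matrix game given by A. If ẑ and z̃ are two limit points of {z^t}, then: (1) ‖a·z* − ẑ‖² = ‖a·z* − z̃‖² for all a ≥ 1; (2) ‖ẑ‖² = ‖z̃‖²; (3) ⟨z*, ẑ − z̃⟩ = 0, where ‖·‖ and ⟨·,·⟩ are the Euclidean norm and inner product. -/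
open scoped BigOperators RealInnerProductSpace
open Filter Topology

noncomputable section

variable {d : ℕ}

def onesV (d : ℕ) : Vec d := WithLp.toLp 2 (fun _ => 1)

lemma inner_vec {d : ℕ} (x y : Vec d) : ⟪x, y⟫ = ∑ i, x i * y i := by
  simp [PiLp.inner_apply, RCLike.inner_apply, mul_comm]

lemma norm_sq_vec {d : ℕ} (x : Vec d) : ‖x‖ ^ 2 = ∑ i, (x i) ^ 2 := by
  rw [← real_inner_self_eq_norm_sq, inner_vec]
  exact Finset.sum_congr rfl fun i _ => (sq (x i)).symm

lemma inner_ones {d : ℕ} (w : Vec d) : ⟪w, onesV d⟫ = ∑ i, w i := by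
  simp [inner_vec, onesV]

lemma norm_sq_ones {d : ℕ} : ‖onesV d‖ ^ 2 = d := by
  simp [norm_sq_vec, onesV]

lemma norm_ones {d : ℕ} : ‖onesV d‖ = Real.sqrt d := by
  rw [← Real.sqrt_sq (norm_nonneg _), norm_sq_ones]

lemma sq_le_imp {a b : ℝ} (hb : 0 ≤ b) (h : a ^ 2 ≤ b ^ 2) (ha : 0 ≤ a) : a ≤ b := by nlinarith

lemma simplex_norm_le {d : ℕ} {x : Vec d} (hx : x ∈ simplexSet d) : ‖x‖ ≤ 1 := by
  refine sq_le_imp zero_le_one ?_ (norm_nonneg _)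
  rw [norm_sq_vec, one_pow]
  calc ∑ i, (x i)^2 ≤ ∑ i, x i * 1 := by
        refine Finset.sum_le_sum fun i _ => ?_
        have h1 : x i ≤ 1 := by
          have := Finset.single_le_sum (f := fun i => x i) (fun j _ => hx.1 j) (Finset.mem_univ i)
          linarith [hx.2]
        nlinarith [hx.1 i]
    _ = 1 := by simp [hx.2]

/-- Key geometric bound. -/
lemma gen_proj_bound {E : Type*} [NormedAddCommGroup E] [InnerProductSpace ℝ E]
    (e f w : E) (hef : ⟪e, f⟫ = 1) :
    ‖w - ⟪w, e⟫ • f‖ ^ 2 ≤ ‖e‖ ^ 2 * ‖f‖ ^ 2 * ‖w‖ ^ 2 := by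
  have hf : f ≠ 0 := by rintro rfl; simp at hef
  have hb : 0 < ‖f‖ := norm_pos_iff.mpr hf
  set b := ‖f‖ with hbdef
  set t := ⟪w, e⟫ with htdef
  set c := ⟪w, f⟫ with hcdef
  have hexp : ‖w - t • f‖ ^ 2 = ‖w‖ ^ 2 - 2 * t * c + t ^ 2 * b ^ 2 := by
    rw [norm_sub_sq_real, real_inner_smul_right, norm_smul]
    simp [mul_pow, sq_abs]
    ring
  have hbb : b * b⁻¹ = 1 := mul_inv_cancel₀ hb.ne'
  have hkey : ⟪w, b • e - b⁻¹ • f⟫ = t * b - c * b⁻¹ := by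
    rw [inner_sub_right, real_inner_smul_right, real_inner_smul_right, ← htdef, ← hcdef]; ring
  have hv : ‖b • e - b⁻¹ • f‖ ^ 2 = b ^ 2 * ‖e‖ ^ 2 - 1 := by
    rw [norm_sub_sq_real, real_inner_smul_left, real_inner_smul_right, norm_smul, norm_smul, hef]
    have h1 : |b⁻¹| = b⁻¹ := abs_of_pos (by positivity)
    have h2 : (b⁻¹)^2 * b^2 = 1 := by field_simp
    simp only [mul_pow, sq_abs, h1, Real.norm_eq_abs]
    nlinarith [h2]
  have hcs : ⟪w, b • e - b⁻¹ • f⟫ ^ 2 ≤ ‖w‖ ^ 2 * ‖b • e - b⁻¹ • f‖ ^ 2 := by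
    have := abs_real_inner_le_norm w (b • e - b⁻¹ • f)
    nlinarith [abs_nonneg (⟪w, b • e - b⁻¹ • f⟫), sq_abs (⟪w, b • e - b⁻¹ • f⟫), norm_nonneg w, norm_nonneg (b • e - b⁻¹ • f)]
  have hb2 : (t * b - c * b⁻¹) ^ 2 = t ^ 2 * b ^ 2 - 2 * t * c + c ^ 2 * (b⁻¹) ^ 2 := by
    linear_combination (-2 * t * c) * hbb
  rw [hkey, hv] at hcs
  rw [hexp]
  nlinarith [hcs, hb2, sq_nonneg (c * b⁻¹)]

/-- A applied to v, as a Euclidean vector. -/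
def Av (A : Matrix (Fin d1) (Fin d2) ℝ) (v : Vec d2) : Vec d1 := WithLp.toLp 2 (fun i => ∑ j, A i j * v j)

/-- Aᵀ applied to w. -/
def Atv (A : Matrix (Fin d1) (Fin d2) ℝ) (w : Vec d1) : Vec d2 := WithLp.toLp 2 (fun j => ∑ i, A i j * w i)

lemma Av_eq (A : Matrix (Fin d1) (Fin d2) ℝ) (v : Vec d2) :
    Av A v = LinearMap.toContinuousLinearMap (Matrix.toEuclideanLin A) v := by
  simp [Av, Matrix.toEuclideanLin_apply, Matrix.mulVec, dotProduct]
  rfl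

lemma opNorm_nonneg (A : Matrix (Fin d1) (Fin d2) ℝ) : 0 ≤ opNorm A := norm_nonneg _

lemma norm_Av_le (A : Matrix (Fin d1) (Fin d2) ℝ) (v : Vec d2) :
    ‖Av A v‖ ≤ opNorm A * ‖v‖ := by
  rw [Av_eq]; exact ContinuousLinearMap.le_opNorm _ _

lemma abs_inner_Av_le (A : Matrix (Fin d1) (Fin d2) ℝ) (w : Vec d1) (v : Vec d2) :
    |⟪w, Av A v⟫| ≤ opNorm A * ‖w‖ * ‖v‖ := by
  calc |⟪w, Av A v⟫| ≤ ‖w‖ * ‖Av A v‖ := abs_real_inner_le_norm _ _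
    _ ≤ ‖w‖ * (opNorm A * ‖v‖) := by
        have := norm_Av_le A v
        nlinarith [norm_nonneg w]
    _ = opNorm A * ‖w‖ * ‖v‖ := by ring

lemma inner_Atv (A : Matrix (Fin d1) (Fin d2) ℝ) (w : Vec d1) (v : Vec d2) :
    ⟪v, Atv A w⟫ = ⟪w, Av A v⟫ := by
  simp only [inner_vec, Av, Atv, Finset.mul_sum, Finset.sum_mul]
  rw [Finset.sum_comm]
  exact Finset.sum_congr rfl fun i _ => Finset.sum_congr rfl fun j _ => by ring

lemma norm_Atv_le (A : Matrix (Fin d1) (Fin d2) ℝ) (w : Vec d1) :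
    ‖Atv A w‖ ≤ opNorm A * ‖w‖ := by
  rcases eq_or_ne (Atv A w) 0 with h | h
  · rw [h, norm_zero]; exact mul_nonneg (opNorm_nonneg A) (norm_nonneg w)
  · have h1 : ‖Atv A w‖ ^ 2 = ⟪Atv A w, Atv A w⟫ := (real_inner_self_eq_norm_sq _).symm
    have h2 : ⟪Atv A w, Atv A w⟫ = ⟪w, Av A (Atv A w)⟫ := inner_Atv A w (Atv A w)
    have h3 := abs_inner_Av_le A w (Atv A w)
    have h4 : ⟪w, Av A (Atv A w)⟫ ≤ opNorm A * ‖w‖ * ‖Atv A w‖ := le_trans (le_abs_self _) h3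
    have h5 : 0 < ‖Atv A w‖ := norm_pos_iff.mpr h
    nlinarith [h1, h2, h4, h5]

-- clipped set facts

lemma clipped_sum_abs {u : Vec d} (hu : u ∈ clippedSet d) : ∑ i, |u i| = ∑ i, u i :=
  Finset.sum_congr rfl fun i _ => abs_of_nonneg (hu.1 i)

lemma clipped_sum_pos {u : Vec d} (hu : u ∈ clippedSet d) : (0:ℝ) < ∑ i, u i :=
  lt_of_lt_of_le one_pos hu.2

lemma normPart_mem {u : Vec d} (hu : u ∈ clippedSet d) : normPart u ∈ simplexSet d := by
  have ha := clipped_sum_pos hu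
  constructor
  · intro i
    have : normPart u i = (∑ i, u i)⁻¹ * u i := by
      simp [normPart, clipped_sum_abs hu]
    rw [this]; exact mul_nonneg (inv_nonneg.mpr ha.le) (hu.1 i)
  · have : ∀ i, normPart u i = (∑ i, u i)⁻¹ * u i := fun i => by
      simp [normPart, clipped_sum_abs hu]
    rw [Finset.sum_congr rfl fun i _ => this i, ← Finset.mul_sum]
    field_simp

lemma normPart_apply {u : Vec d} (hu : u ∈ clippedSet d) (i : Fin d) :
    normPart u i = (∑ i, u i)⁻¹ * u i := by simp [normPart, clipped_sum_abs hu]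

/-- Normalization is √d-Lipschitz on the clipped set. -/
lemma normPart_lip {u u' : Vec d} (hu : u ∈ clippedSet d) (hu' : u' ∈ clippedSet d) :
    ‖normPart u - normPart u'‖ ≤ Real.sqrt d * ‖u - u'‖ := by
  set a := ∑ i, u i with hadef
  set a' := ∑ i, u' i with ha'def
  have ha : 0 < a := clipped_sum_pos hu
  have ha' : 0 < a' := clipped_sum_pos hu'
  have ha1 : 1 ≤ a := hu.2
  set w : Vec d := u - u' with hwdef
  set x' : Vec d := normPart u' with hx'def
  have hiw : ⟪w, onesV d⟫ = a - a' := by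
    rw [inner_ones]
    have : ∀ i, w i = u i - u' i := fun i => rfl
    rw [Finset.sum_congr rfl fun i _ => this i, Finset.sum_sub_distrib]
  have hid : normPart u - normPart u' = a⁻¹ • (w - ⟪w, onesV d⟫ • x') := by
    rw [hiw]
    ext i
    have e1 : (normPart u - normPart u') i = normPart u i - normPart u' i := rfl
    have e2 : (a⁻¹ • (w - (a - a') • x')) i = a⁻¹ * (w i - (a - a') * x' i) := rfl
    rw [e1, e2, normPart_apply hu, normPart_apply hu', ← hadef, ← ha'def]
    have e3 : w i = u i - u' i := rfl
    have e4 : x' i = a'⁻¹ * u' i := by rw [hx'def, normPart_apply hu', ← ha'def]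
    rw [e3]
    field_simp
    ring
  have hones : ⟪onesV d, x'⟫ = 1 := by
    rw [real_inner_comm, inner_ones]
    exact (normPart_mem hu').2
  have hb := gen_proj_bound (onesV d) x' w hones
  have hx'n : ‖x'‖ ≤ 1 := simplex_norm_le (normPart_mem hu')
  have hkey : ‖w - ⟪w, onesV d⟫ • x'‖ ^ 2 ≤ (d : ℝ) * ‖w‖ ^ 2 := by
    calc ‖w - ⟪w, onesV d⟫ • x'‖ ^ 2 ≤ ‖onesV d‖^2 * ‖x'‖^2 * ‖w‖^2 := hb
      _ ≤ (d:ℝ) * ‖w‖^2 := by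
          rw [norm_sq_ones]
          have hx2 : ‖x'‖^2 ≤ 1 := by nlinarith [norm_nonneg x']
          nlinarith [mul_nonneg (mul_nonneg (Nat.cast_nonneg (α := ℝ) d) (sq_nonneg ‖w‖)) (sub_nonneg.mpr hx2)]
  rw [hid, norm_smul]
  have hai : |a⁻¹| ≤ 1 := by
    rw [abs_of_pos (inv_pos.mpr ha)]
    rw [inv_le_one_iff₀]; right; exact ha1
  calc |a⁻¹| * ‖w - ⟪w, onesV d⟫ • x'‖ ≤ 1 * ‖w - ⟪w, onesV d⟫ • x'‖ := by
        apply mul_le_mul_of_nonneg_right hai (norm_nonneg _)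
    _ = ‖w - ⟪w, onesV d⟫ • x'‖ := one_mul _
    _ ≤ Real.sqrt d * ‖w‖ := by
        apply sq_le_imp (by positivity) _ (norm_nonneg _)
        rw [mul_pow, Real.sq_sqrt (Nat.cast_nonneg d)]
        exact hkey

lemma inner_eucl {ι : Type*} [Fintype ι] (x y : EuclideanSpace ℝ ι) :
    ⟪x, y⟫ = ∑ i, x i * y i := by
  simp [PiLp.inner_apply, RCLike.inner_apply, mul_comm]

lemma norm_sq_eucl {ι : Type*} [Fintype ι] (x : EuclideanSpace ℝ ι) :
    ‖x‖ ^ 2 = ∑ i, (x i) ^ 2 := by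
  rw [← real_inner_self_eq_norm_sq, inner_eucl]
  exact Finset.sum_congr rfl fun i _ => (sq (x i)).symm

lemma xPart_sub (z z' : Joint d1 d2) : xPart (z - z') = xPart z - xPart z' := rfl

lemma yPart_sub (z z' : Joint d1 d2) : yPart (z - z') = yPart z - yPart z' := rfl

lemma norm_joint_sq (z : Joint d1 d2) : ‖z‖ ^ 2 = ‖xPart z‖ ^ 2 + ‖yPart z‖ ^ 2 := by
  rw [norm_sq_eucl, norm_sq_vec, norm_sq_vec, Fintype.sum_sum_type]
  rfl

lemma inner_joint (z w : Joint d1 d2) :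
    ⟪z, w⟫ = ⟪xPart z, xPart w⟫ + ⟪yPart z, yPart w⟫ := by
  rw [inner_eucl, inner_vec, inner_vec, Fintype.sum_sum_type]
  rfl

lemma payoff_eq_inner (A : Matrix (Fin d1) (Fin d2) ℝ) (x : Vec d1) (y : Vec d2) :
    payoff A x y = ⟪x, Av A y⟫ := by
  rw [inner_vec, payoff]
  exact Finset.sum_congr rfl fun i _ => by rw [Av, Finset.mul_sum]; exact Finset.sum_congr rfl fun j _ => by ring

lemma proj_ones_bound {x : Vec d} (hx : x ∈ simplexSet d) (w : Vec d) :
    ‖w - ⟪x, w⟫ • onesV d‖ ≤ Real.sqrt d * ‖w‖ := by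
  have hef : ⟪x, onesV d⟫ = 1 := by rw [inner_ones]; exact hx.2
  have hb := gen_proj_bound x (onesV d) w hef
  have hx2 : ‖x‖ ^ 2 ≤ 1 := by nlinarith [simplex_norm_le hx, norm_nonneg x]
  have hcomm : (⟪x, w⟫ : ℝ) = ⟪w, x⟫ := real_inner_comm w x
  rw [hcomm]
  apply sq_le_imp (mul_nonneg (Real.sqrt_nonneg _) (norm_nonneg _)) _ (norm_nonneg _)
  rw [mul_pow, Real.sq_sqrt (Nat.cast_nonneg d)]
  calc ‖w - ⟪w, x⟫ • onesV d‖ ^ 2 ≤ ‖x‖^2 * ‖onesV d‖^2 * ‖w‖^2 := hb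
    _ ≤ (d:ℝ) * ‖w‖^2 := by
        rw [norm_sq_ones]
        nlinarith [mul_nonneg (Nat.cast_nonneg (α := ℝ) d) (sq_nonneg ‖w‖), sub_nonneg.mpr hx2]

lemma Av_sub (A : Matrix (Fin d1) (Fin d2) ℝ) (y y' : Vec d2) :
    Av A (y - y') = Av A y - Av A y' := by
  ext i
  show ∑ j, A i j * (y j - y' j) = (∑ j, A i j * y j) - ∑ j, A i j * y' j
  rw [← Finset.sum_sub_distrib]
  exact Finset.sum_congr rfl fun j _ => by ring

lemma lip_combine {s1 s2 D opA dx dy δ1 δ2 p1 p2 s6 : ℝ}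
    (hs10 : 0 ≤ s1) (hs20 : 0 ≤ s2) (hs60 : 0 ≤ s6) (hs6 : 4 ≤ s6 ^ 2)
    (hD1 : 1 ≤ D) (hd1D : s1 ^ 2 ≤ D) (hd2D : s2 ^ 2 ≤ D)
    (hopA0 : 0 ≤ opA) (hp10 : 0 ≤ p1) (hp20 : 0 ≤ p2) (hδ10 : 0 ≤ δ1) (hδ20 : 0 ≤ δ2)
    (hdx0 : 0 ≤ dx) (hdy0 : 0 ≤ dy)
    (hp1 : p1 ≤ s1 * (opA * (dx + dy))) (hp2 : p2 ≤ s2 * (opA * (dx + dy)))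
    (hdxb : dx ≤ s1 * δ1) (hdyb : dy ≤ s2 * δ2) :
    p1 ^ 2 + p2 ^ 2 ≤ (s6 * opA * D) ^ 2 * (δ1 ^ 2 + δ2 ^ 2) := by
  have hQ0 : 0 ≤ opA * (dx + dy) := mul_nonneg hopA0 (by linarith)
  have hb1 : p1 ^ 2 ≤ s1 ^ 2 * (opA * (dx + dy)) ^ 2 := by
    have := pow_le_pow_left₀ hp10 hp1 2
    rwa [mul_pow] at this
  have hb2 : p2 ^ 2 ≤ s2 ^ 2 * (opA * (dx + dy)) ^ 2 := by
    have := pow_le_pow_left₀ hp20 hp2 2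
    rwa [mul_pow] at this
  have hdx2 : dx ^ 2 ≤ s1 ^ 2 * δ1 ^ 2 := by
    have := pow_le_pow_left₀ hdx0 hdxb 2
    rwa [mul_pow] at this
  have hdy2 : dy ^ 2 ≤ s2 ^ 2 * δ2 ^ 2 := by
    have := pow_le_pow_left₀ hdy0 hdyb 2
    rwa [mul_pow] at this
  have hT : (dx + dy) ^ 2 ≤ 2 * (D * (δ1 ^ 2 + δ2 ^ 2)) := by
    nlinarith [sq_nonneg (dx - dy), mul_nonneg (sub_nonneg.mpr hd1D) (sq_nonneg δ1),
      mul_nonneg (sub_nonneg.mpr hd2D) (sq_nonneg δ2)]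
  set T := δ1 ^ 2 + δ2 ^ 2 with hTdef
  have hT0 : (0:ℝ) ≤ T := by rw [hTdef]; positivity
  set Q := (opA * (dx + dy)) ^ 2 with hQdef
  have hQ0' : (0:ℝ) ≤ Q := by rw [hQdef]; exact sq_nonneg _
  have hq : Q ≤ opA ^ 2 * (2 * (D * T)) := by
    rw [hQdef, mul_pow]
    exact mul_le_mul_of_nonneg_left hT (sq_nonneg opA)
  have h12 : s1 ^ 2 + s2 ^ 2 ≤ 2 * D := by linarith
  have ha : p1 ^ 2 + p2 ^ 2 ≤ (s1 ^ 2 + s2 ^ 2) * Q := by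
    have hr : (s1 ^ 2 + s2 ^ 2) * Q = s1 ^ 2 * Q + s2 ^ 2 * Q := by ring
    linarith [hb1, hb2]
  have hbq : (s1 ^ 2 + s2 ^ 2) * Q ≤ (2 * D) * Q :=
    mul_le_mul_of_nonneg_right h12 hQ0'
  have hcq : (2 * D) * Q ≤ (2 * D) * (opA ^ 2 * (2 * (D * T))) :=
    mul_le_mul_of_nonneg_left hq (by linarith)
  have hx0 : (0:ℝ) ≤ opA ^ 2 * D ^ 2 * T := by positivity
  have hfin : (2 * D) * (opA ^ 2 * (2 * (D * T))) ≤ (s6 * opA * D) ^ 2 * T := by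
    nlinarith [mul_le_mul_of_nonneg_right hs6 hx0]
  linarith

set_option maxHeartbeats 2000000 in
/-- Lipschitz continuity of the regret operator on the clipped set. -/
lemma Fop_lip (hd1 : 1 ≤ d1) (hd2 : 1 ≤ d2) (A : Matrix (Fin d1) (Fin d2) ℝ)
    {z z' : Joint d1 d2} (hz : z ∈ ZgeSet d1 d2) (hz' : z' ∈ ZgeSet d1 d2) :
    ‖Fop A z - Fop A z'‖ ≤ LF A * ‖z - z'‖ := by
  set x := normPart (xPart z) with hxdef
  set y := normPart (yPart z) with hydef
  set x' := normPart (xPart z') with hx'def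
  set y' := normPart (yPart z') with hy'def
  have hx : x ∈ simplexSet d1 := normPart_mem hz.1
  have hy : y ∈ simplexSet d2 := normPart_mem hz.2
  have hxx : x' ∈ simplexSet d1 := normPart_mem hz'.1
  have hyy : y' ∈ simplexSet d2 := normPart_mem hz'.2
  set Δx : Vec d1 := x - x' with hΔx
  set Δy : Vec d2 := y - y' with hΔy
  have hc : payoff A x y - payoff A x' y' = ⟪x, Av A Δy⟫ + ⟪Δx, Av A y'⟫ := by
    rw [payoff_eq_inner, payoff_eq_inner, hΔy, hΔx, Av_sub, inner_sub_right, inner_sub_left]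
    ring
  -- first block
  have hF1 : xPart (Fop A z - Fop A z')
      = (Av A Δy - ⟪x, Av A Δy⟫ • onesV d1) - ⟪Δx, Av A y'⟫ • onesV d1 := by
    ext i
    have e1 : xPart (Fop A z - Fop A z') i = Fop A z (Sum.inl i) - Fop A z' (Sum.inl i) := rfl
    have e2 : Fop A z (Sum.inl i) = Av A y i - payoff A x y := rfl
    have e3 : Fop A z' (Sum.inl i) = Av A y' i - payoff A x' y' := rfl
    have e4 : ((Av A Δy - ⟪x, Av A Δy⟫ • onesV d1) - ⟪Δx, Av A y'⟫ • onesV d1) i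
        = Av A Δy i - ⟪x, Av A Δy⟫ * 1 - ⟪Δx, Av A y'⟫ * 1 := rfl
    have e5 : Av A Δy i = Av A y i - Av A y' i := by rw [hΔy, Av_sub]; rfl
    rw [e1, e2, e3, e4, e5]
    have := hc
    linarith
  -- second block
  have hF2 : yPart (Fop A z - Fop A z')
      = ⟪x, Av A Δy⟫ • onesV d2 - (Atv A Δx - ⟪y', Atv A Δx⟫ • onesV d2) := by
    ext j
    have e1 : yPart (Fop A z - Fop A z') j = Fop A z (Sum.inr j) - Fop A z' (Sum.inr j) := rfl
    have e2 : Fop A z (Sum.inr j) = -(Atv A x j) + payoff A x y := rfl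
    have e3 : Fop A z' (Sum.inr j) = -(Atv A x' j) + payoff A x' y' := rfl
    have e4 : (⟪x, Av A Δy⟫ • onesV d2 - (Atv A Δx - ⟪y', Atv A Δx⟫ • onesV d2)) j
        = ⟪x, Av A Δy⟫ * 1 - (Atv A Δx j - ⟪y', Atv A Δx⟫ * 1) := rfl
    have e5 : Atv A Δx j = Atv A x j - Atv A x' j := by
      show ∑ i, A i j * (x i - x' i) = (∑ i, A i j * x i) - ∑ i, A i j * x' i
      rw [← Finset.sum_sub_distrib]
      exact Finset.sum_congr rfl fun i _ => by ring
    have e6 : ⟪y', Atv A Δx⟫ = ⟪Δx, Av A y'⟫ := inner_Atv A Δx y'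
    rw [e1, e2, e3, e4, e5, e6]
    have := hc
    linarith
  -- norms of the blocks
  set opA := opNorm A with hopA
  have hopA0 : 0 ≤ opA := opNorm_nonneg A
  have hy'1 : ‖y'‖ ≤ 1 := simplex_norm_le hyy
  have hx1 : ‖x‖ ≤ 1 := simplex_norm_le hx
  have nAv : ‖Av A Δy‖ ≤ opA * ‖Δy‖ := norm_Av_le A Δy
  have nAtv : ‖Atv A Δx‖ ≤ opA * ‖Δx‖ := norm_Atv_le A Δx
  have hin1 : |⟪Δx, Av A y'⟫| ≤ opA * ‖Δx‖ := by
    have := abs_inner_Av_le A Δx y'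
    nlinarith [mul_nonneg hopA0 (norm_nonneg Δx)]
  have hin2 : |⟪x, Av A Δy⟫| ≤ opA * ‖Δy‖ := by
    have := abs_inner_Av_le A x Δy
    nlinarith [mul_nonneg hopA0 (norm_nonneg Δy)]
  have nF1 : ‖xPart (Fop A z - Fop A z')‖ ≤ Real.sqrt d1 * (opA * (‖Δx‖ + ‖Δy‖)) := by
    rw [hF1]
    calc ‖(Av A Δy - ⟪x, Av A Δy⟫ • onesV d1) - ⟪Δx, Av A y'⟫ • onesV d1‖
        ≤ ‖Av A Δy - ⟪x, Av A Δy⟫ • onesV d1‖ + ‖⟪Δx, Av A y'⟫ • onesV d1‖ := norm_sub_le _ _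
      _ ≤ Real.sqrt d1 * ‖Av A Δy‖ + |⟪Δx, Av A y'⟫| * Real.sqrt d1 := by
          have := proj_ones_bound hx (Av A Δy)
          rw [norm_smul, Real.norm_eq_abs, norm_ones]
          linarith
      _ ≤ Real.sqrt d1 * (opA * (‖Δx‖ + ‖Δy‖)) := by
          have hs : (0:ℝ) ≤ Real.sqrt d1 := Real.sqrt_nonneg _
          nlinarith [nAv, hin1]
  have nF2 : ‖yPart (Fop A z - Fop A z')‖ ≤ Real.sqrt d2 * (opA * (‖Δx‖ + ‖Δy‖)) := by
    rw [hF2]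
    calc ‖⟪x, Av A Δy⟫ • onesV d2 - (Atv A Δx - ⟪y', Atv A Δx⟫ • onesV d2)‖
        ≤ ‖⟪x, Av A Δy⟫ • onesV d2‖ + ‖Atv A Δx - ⟪y', Atv A Δx⟫ • onesV d2‖ := norm_sub_le _ _
      _ ≤ |⟪x, Av A Δy⟫| * Real.sqrt d2 + Real.sqrt d2 * ‖Atv A Δx‖ := by
          have := proj_ones_bound hyy (Atv A Δx)
          rw [norm_smul, Real.norm_eq_abs, norm_ones]
          linarith
      _ ≤ Real.sqrt d2 * (opA * (‖Δx‖ + ‖Δy‖)) := by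
          have hs : (0:ℝ) ≤ Real.sqrt d2 := Real.sqrt_nonneg _
          nlinarith [nAtv, hin2]
  -- normalization Lipschitz
  have hdx : ‖Δx‖ ≤ Real.sqrt d1 * ‖xPart (z - z')‖ := by
    rw [xPart_sub]; exact normPart_lip hz.1 hz'.1
  have hdy : ‖Δy‖ ≤ Real.sqrt d2 * ‖yPart (z - z')‖ := by
    rw [yPart_sub]; exact normPart_lip hz.2 hz'.2
  -- assemble
  set D := max (d1 : ℝ) (d2 : ℝ) with hD
  have hD1 : (1:ℝ) ≤ D := le_trans (by exact_mod_cast hd1) (le_max_left _ _)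
  have hLF : LF A = Real.sqrt 6 * opA * D := rfl
  have hs1 : Real.sqrt (d1:ℝ) ^ 2 = (d1:ℝ) := Real.sq_sqrt (Nat.cast_nonneg _)
  have hs2 : Real.sqrt (d2:ℝ) ^ 2 = (d2:ℝ) := Real.sq_sqrt (Nat.cast_nonneg _)
  have hs6 : (4:ℝ) ≤ Real.sqrt 6 ^ 2 := by rw [Real.sq_sqrt]; norm_num; norm_num
  have hzz : ‖z - z'‖ ^ 2 = ‖xPart (z - z')‖ ^ 2 + ‖yPart (z - z')‖ ^ 2 := norm_joint_sq _
  have hFsq : ‖Fop A z - Fop A z'‖ ^ 2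
      = ‖xPart (Fop A z - Fop A z')‖ ^ 2 + ‖yPart (Fop A z - Fop A z')‖ ^ 2 := norm_joint_sq _
  apply sq_le_imp _ _ (norm_nonneg _)
  · rw [hLF]
    exact mul_nonneg (mul_nonneg (mul_nonneg (Real.sqrt_nonneg _) hopA0)
      (le_trans zero_le_one hD1)) (norm_nonneg _)
  rw [mul_pow, hLF, hzz, hFsq]
  exact lip_combine (Real.sqrt_nonneg _) (Real.sqrt_nonneg _) (Real.sqrt_nonneg _) hs6 hD1
    (by rw [hs1]; exact le_max_left _ _) (by rw [hs2]; exact le_max_right _ _)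
    hopA0 (norm_nonneg _) (norm_nonneg _) (norm_nonneg _) (norm_nonneg _)
    (norm_nonneg _) (norm_nonneg _) nF1 nF2 hdx hdy

lemma projOn_spec {E : Type*} [NormedAddCommGroup E] [InnerProductSpace ℝ E] [CompleteSpace E]
    {S : Set E} (hne : S.Nonempty) (hc : IsClosed S) (hcv : Convex ℝ S) (u : E) :
    projOn S u ∈ S ∧ ∀ w ∈ S, ⟪u - projOn S u, w - projOn S u⟫ ≤ 0 := by
  obtain ⟨v, hvS, hv⟩ := exists_norm_eq_iInf_of_complete_convex hne hc.isComplete hcv u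
  haveI : Nonempty S := ⟨⟨v, hvS⟩⟩
  have hbdd : BddBelow (Set.range fun w : S => ‖u - (w:E)‖) := by
    refine ⟨0, ?_⟩
    rintro r ⟨w, rfl⟩
    exact norm_nonneg _
  have h : ∃ p ∈ S, ∀ q ∈ S, ‖u - p‖ ≤ ‖u - q‖ := by
    refine ⟨v, hvS, fun q hq => ?_⟩
    rw [hv]
    exact ciInf_le hbdd ⟨q, hq⟩
  have hproj : projOn S u = h.choose := by rw [projOn, dif_pos h]
  obtain ⟨hpS, hpmin⟩ := h.choose_spec
  have heq : ‖u - h.choose‖ = ⨅ w : S, ‖u - (w:E)‖ := by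
    apply le_antisymm
    · exact le_ciInf fun w => hpmin w w.2
    · exact ciInf_le hbdd ⟨h.choose, hpS⟩
  rw [hproj]
  exact ⟨hpS, (norm_eq_iInf_iff_real_inner_le_zero hcv hpS).mp heq⟩

lemma joint_apply_inl (x : Vec d1) (y : Vec d2) (i : Fin d1) : joinPt x y (Sum.inl i) = x i := rfl

lemma joint_apply_inr (x : Vec d1) (y : Vec d2) (j : Fin d2) : joinPt x y (Sum.inr j) = y j := rfl

lemma Zset_subset_Zge : Zset d1 d2 ⊆ ZgeSet d1 d2 := by
  rintro z ⟨⟨hx1, hx2⟩, ⟨hy1, hy2⟩⟩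
  exact ⟨⟨hx1, le_of_eq hx2.symm⟩, ⟨hy1, le_of_eq hy2.symm⟩⟩

lemma Zge_nonempty (hd1 : 1 ≤ d1) (hd2 : 1 ≤ d2) : (ZgeSet d1 d2).Nonempty := by
  refine ⟨(WithLp.toLp 2 (fun _ => 1) : Joint d1 d2), ⟨fun i => zero_le_one, ?_⟩, ⟨fun j => zero_le_one, ?_⟩⟩
  · simp [xPart]; exact_mod_cast hd1
  · simp [yPart]; exact_mod_cast hd2

lemma Zge_closed : IsClosed (ZgeSet d1 d2) := by
  have hcoord : ∀ s : Fin d1 ⊕ Fin d2, Continuous fun z : Joint d1 d2 => z s := by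
    intro s
    exact (EuclideanSpace.proj s : Joint d1 d2 →L[ℝ] ℝ).continuous
  have h1 : IsClosed {z : Joint d1 d2 | ∀ i, 0 ≤ xPart z i} := by
    have : {z : Joint d1 d2 | ∀ i, 0 ≤ xPart z i} = ⋂ i, {z | 0 ≤ z (Sum.inl i)} := by
      ext z; simp [xPart]
    rw [this]
    exact isClosed_iInter fun i => isClosed_le continuous_const (hcoord _)
  have h2 : IsClosed {z : Joint d1 d2 | 1 ≤ ∑ i, xPart z i} :=
    isClosed_le continuous_const (continuous_finset_sum _ fun i _ => hcoord (Sum.inl i))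
  have h3 : IsClosed {z : Joint d1 d2 | ∀ j, 0 ≤ yPart z j} := by
    have : {z : Joint d1 d2 | ∀ j, 0 ≤ yPart z j} = ⋂ j, {z | 0 ≤ z (Sum.inr j)} := by
      ext z; simp [yPart]
    rw [this]
    exact isClosed_iInter fun j => isClosed_le continuous_const (hcoord _)
  have h4 : IsClosed {z : Joint d1 d2 | 1 ≤ ∑ j, yPart z j} :=
    isClosed_le continuous_const (continuous_finset_sum _ fun j _ => hcoord (Sum.inr j))
  have : ZgeSet d1 d2 = ({z : Joint d1 d2 | ∀ i, 0 ≤ xPart z i} ∩ {z | 1 ≤ ∑ i, xPart z i}) ∩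
      ({z : Joint d1 d2 | ∀ j, 0 ≤ yPart z j} ∩ {z | 1 ≤ ∑ j, yPart z j}) := by
    ext z
    constructor
    · rintro ⟨⟨a, b⟩, ⟨c, e⟩⟩; exact ⟨⟨a, b⟩, ⟨c, e⟩⟩
    · rintro ⟨⟨a, b⟩, ⟨c, e⟩⟩; exact ⟨⟨a, b⟩, ⟨c, e⟩⟩
  rw [this]
  exact (h1.inter h2).inter (h3.inter h4)

lemma joint_add_apply (z w : Joint d1 d2) (s : Fin d1 ⊕ Fin d2) : (z + w) s = z s + w s := rfl

lemma joint_smul_apply (c : ℝ) (z : Joint d1 d2) (s : Fin d1 ⊕ Fin d2) : (c • z) s = c * z s := rfl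

lemma Zge_convex : Convex ℝ (ZgeSet d1 d2) := by
  rintro z hz w hw a b ha hb hab
  have hcoord : ∀ s, (a • z + b • w) s = a * z s + b * w s := fun s => rfl
  constructor
  · constructor
    · intro i
      have := hcoord (Sum.inl i)
      show 0 ≤ (a • z + b • w) (Sum.inl i)
      rw [this]
      have := hz.1.1 i; have := hw.1.1 i
      have h1 : 0 ≤ a * z (Sum.inl i) := mul_nonneg ha (hz.1.1 i)
      have h2 : 0 ≤ b * w (Sum.inl i) := mul_nonneg hb (hw.1.1 i)
      linarith
    · show 1 ≤ ∑ i, (a • z + b • w) (Sum.inl i)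
      have : ∀ i, (a • z + b • w) (Sum.inl i) = a * z (Sum.inl i) + b * w (Sum.inl i) := fun i => rfl
      rw [Finset.sum_congr rfl fun i _ => this i, Finset.sum_add_distrib, ← Finset.mul_sum, ← Finset.mul_sum]
      have h1 : 1 ≤ ∑ i, z (Sum.inl i) := hz.1.2
      have h2 : 1 ≤ ∑ i, w (Sum.inl i) := hw.1.2
      nlinarith [mul_le_mul_of_nonneg_left h1 ha, mul_le_mul_of_nonneg_left h2 hb]
  · constructor
    · intro j
      show 0 ≤ (a • z + b • w) (Sum.inr j)
      rw [hcoord (Sum.inr j)]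
      have h1 : 0 ≤ a * z (Sum.inr j) := mul_nonneg ha (hz.2.1 j)
      have h2 : 0 ≤ b * w (Sum.inr j) := mul_nonneg hb (hw.2.1 j)
      linarith
    · show 1 ≤ ∑ j, (a • z + b • w) (Sum.inr j)
      have : ∀ j, (a • z + b • w) (Sum.inr j) = a * z (Sum.inr j) + b * w (Sum.inr j) := fun j => rfl
      rw [Finset.sum_congr rfl fun j _ => this j, Finset.sum_add_distrib, ← Finset.mul_sum, ← Finset.mul_sum]
      have h1 : 1 ≤ ∑ j, z (Sum.inr j) := hz.2.2
      have h2 : 1 ≤ ∑ j, w (Sum.inr j) := hw.2.2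
      nlinarith [mul_le_mul_of_nonneg_left h1 ha, mul_le_mul_of_nonneg_left h2 hb]

lemma simplex_coord_le_one {x : Vec d} (hx : x ∈ simplexSet d) (i : Fin d) : x i ≤ 1 := by
  have := Finset.single_le_sum (f := fun i => x i) (fun j _ => hx.1 j) (Finset.mem_univ i)
  linarith [hx.2]

lemma payoff_abs_le {A : Matrix (Fin d1) (Fin d2) ℝ} {x : Vec d1} {y : Vec d2}
    (hx : x ∈ simplexSet d1) (hy : y ∈ simplexSet d2) :
    |payoff A x y| ≤ ∑ i, ∑ j, |A i j| := by
  rw [payoff]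
  calc |∑ i, ∑ j, x i * A i j * y j| ≤ ∑ i, |∑ j, x i * A i j * y j| := Finset.abs_sum_le_sum_abs _ _
    _ ≤ ∑ i, ∑ j, |x i * A i j * y j| :=
        Finset.sum_le_sum fun i _ => Finset.abs_sum_le_sum_abs _ _
    _ ≤ ∑ i, ∑ j, |A i j| := by
        refine Finset.sum_le_sum fun i _ => Finset.sum_le_sum fun j _ => ?_
        rw [abs_mul, abs_mul, abs_of_nonneg (hx.1 i), abs_of_nonneg (hy.1 j)]
        have h1 : x i * |A i j| ≤ |A i j| := mul_le_of_le_one_left (abs_nonneg _) (simplex_coord_le_one hx i)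
        have h2 : x i * |A i j| * y j ≤ x i * |A i j| :=
          mul_le_of_le_one_right (mul_nonneg (hx.1 i) (abs_nonneg _)) (simplex_coord_le_one hy j)
        linarith

lemma nash_saddle {A : Matrix (Fin d1) (Fin d2) ℝ} {xs : Vec d1} {ys : Vec d2}
    (hN : IsNash A xs ys) :
    ∀ x' ∈ simplexSet d1, ∀ y' ∈ simplexSet d2, payoff A xs y' ≤ payoff A x' ys := by
  intro x' hx' y' hy'
  set C := ∑ i, ∑ j, |A i j| with hC
  have hbddA : BddAbove ((fun y' => payoff A xs y') '' simplexSet d2) := by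
    refine ⟨C, ?_⟩
    rintro r ⟨yy, hyy, rfl⟩
    have := payoff_abs_le (A := A) hN.1 hyy
    calc payoff A xs yy ≤ |payoff A xs yy| := le_abs_self _
      _ ≤ C := this
  have hbddB : BddBelow ((fun x' => payoff A x' ys) '' simplexSet d1) := by
    refine ⟨-C, ?_⟩
    rintro r ⟨xx, hxx, rfl⟩
    have := payoff_abs_le (A := A) hxx hN.2.1
    have h2 := neg_abs_le (payoff A xx ys)
    simp only
    linarith
  have h1 : payoff A xs y' ≤ sSup ((fun y' => payoff A xs y') '' simplexSet d2) :=
    le_csSup hbddA ⟨y', hy', rfl⟩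
  have h2 : sInf ((fun x' => payoff A x' ys) '' simplexSet d1) ≤ payoff A x' ys :=
    csInf_le hbddB ⟨x', hx', rfl⟩
  have h3 := hN.2.2
  rw [dualGap, sub_eq_zero] at h3
  linarith [h3 ▸ h1]

-- Evaluation of ⟪Fop A z, w⟫

lemma Fop_inner_eval (A : Matrix (Fin d1) (Fin d2) ℝ) (z w : Joint d1 d2) :
    ⟪Fop A z, w⟫ = ⟪Av A (normPart (yPart z)), xPart w⟫
      - (∑ i, xPart w i) * payoff A (normPart (xPart z)) (normPart (yPart z))
      - ⟪Atv A (normPart (xPart z)), yPart w⟫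
      + (∑ j, yPart w j) * payoff A (normPart (xPart z)) (normPart (yPart z)) := by
  set x := normPart (xPart z)
  set y := normPart (yPart z)
  set P := payoff A x y with hP
  rw [inner_joint]
  have e1 : ⟪xPart (Fop A z), xPart w⟫ = ⟪Av A y, xPart w⟫ - (∑ i, xPart w i) * P := by
    have hco : ∀ i, xPart (Fop A z) i = Av A y i - P := fun i => rfl
    rw [inner_vec, inner_vec, Finset.sum_congr rfl fun i _ => by rw [hco i]]
    rw [Finset.sum_congr rfl fun i _ => (sub_mul (Av A y i) P (xPart w i)),
      Finset.sum_sub_distrib]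
    congr 1
    rw [Finset.sum_mul]
    exact Finset.sum_congr rfl fun i _ => mul_comm _ _
  have e2 : ⟪yPart (Fop A z), yPart w⟫ = -⟪Atv A x, yPart w⟫ + (∑ j, yPart w j) * P := by
    have hco : ∀ j, yPart (Fop A z) j = -(Atv A x j) + P := fun j => rfl
    rw [inner_vec, inner_vec, Finset.sum_congr rfl fun j _ => by rw [hco j]]
    rw [Finset.sum_congr rfl fun j _ => (add_mul (-(Atv A x j)) P (yPart w j)),
      Finset.sum_add_distrib,
      Finset.sum_congr rfl fun j _ => (neg_mul (Atv A x j) (yPart w j)), Finset.sum_neg_distrib]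
    congr 1
    rw [Finset.sum_mul]
    exact Finset.sum_congr rfl fun j _ => mul_comm _ _
  rw [e1, e2]
  ring

lemma sum_normPart_smul {u : Vec d} (hu : u ∈ clippedSet d) (g : Fin d → ℝ) :
    ∑ i, g i * u i = (∑ k, u k) * ∑ i, g i * normPart u i := by
  have ha : (0:ℝ) < ∑ k, u k := clipped_sum_pos hu
  rw [Finset.mul_sum]
  refine Finset.sum_congr rfl fun i _ => ?_
  rw [normPart_apply hu]
  field_simp

lemma Fop_inner_self (A : Matrix (Fin d1) (Fin d2) ℝ) {z : Joint d1 d2}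
    (hz : z ∈ ZgeSet d1 d2) : ⟪Fop A z, z⟫ = 0 := by
  rw [Fop_inner_eval]
  set x := normPart (xPart z)
  set y := normPart (yPart z)
  set P := payoff A x y with hP
  have e1 : ⟪Av A y, xPart z⟫ = (∑ k, xPart z k) * P := by
    rw [inner_vec, sum_normPart_smul hz.1 (fun i => Av A y i)]
    congr 1
    rw [hP, payoff_eq_inner, inner_vec]
    exact Finset.sum_congr rfl fun i _ => mul_comm _ _
  have e2 : ⟪Atv A x, yPart z⟫ = (∑ k, yPart z k) * P := by
    rw [inner_vec, sum_normPart_smul hz.2 (fun j => Atv A x j)]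
    congr 1
    have : ∑ j, Atv A x j * normPart (yPart z) j = ⟪y, Atv A x⟫ := by
      rw [inner_vec]
      exact Finset.sum_congr rfl fun j _ => mul_comm _ _
    rw [this, inner_Atv, hP, payoff_eq_inner]
  rw [e1, e2]
  ring

lemma Fop_inner_star (A : Matrix (Fin d1) (Fin d2) ℝ) (z : Joint d1 d2)
    {xs : Vec d1} {ys : Vec d2} (hxs : xs ∈ simplexSet d1) (hys : ys ∈ simplexSet d2) :
    ⟪Fop A z, joinPt xs ys⟫
      = payoff A xs (normPart (yPart z)) - payoff A (normPart (xPart z)) ys := by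
  rw [Fop_inner_eval]
  have hx : xPart (joinPt xs ys) = xs := rfl
  have hy : yPart (joinPt xs ys) = ys := rfl
  rw [hx, hy, hxs.2, hys.2]
  have e1 : ⟪Av A (normPart (yPart z)), xs⟫ = payoff A xs (normPart (yPart z)) := by
    rw [payoff_eq_inner, real_inner_comm]
  have e2 : ⟪Atv A (normPart (xPart z)), ys⟫ = payoff A (normPart (xPart z)) ys := by
    rw [payoff_eq_inner, ← inner_Atv, real_inner_comm]
  rw [e1, e2]
  ring

lemma star_smul_mem {xs : Vec d1} {ys : Vec d2} (hxs : xs ∈ simplexSet d1)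
    (hys : ys ∈ simplexSet d2) {a : ℝ} (ha : 1 ≤ a) :
    a • joinPt xs ys ∈ ZgeSet d1 d2 := by
  have ha0 : 0 ≤ a := le_trans zero_le_one ha
  constructor
  · constructor
    · intro i
      show 0 ≤ a * joinPt xs ys (Sum.inl i)
      exact mul_nonneg ha0 (hxs.1 i)
    · show 1 ≤ ∑ i, a * joinPt xs ys (Sum.inl i)
      rw [← Finset.mul_sum]
      have : ∑ i, joinPt xs ys (Sum.inl i) = 1 := hxs.2
      rw [this, mul_one]
      exact ha
  · constructor
    · intro j
      show 0 ≤ a * joinPt xs ys (Sum.inr j)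
      exact mul_nonneg ha0 (hys.1 j)
    · show 1 ≤ ∑ j, a * joinPt xs ys (Sum.inr j)
      rw [← Finset.mul_sum]
      have : ∑ j, joinPt xs ys (Sum.inr j) = 1 := hys.2
      rw [this, mul_one]
      exact ha

lemma minty (A : Matrix (Fin d1) (Fin d2) ℝ) {xs : Vec d1} {ys : Vec d2}
    (hN : IsNash A xs ys) {a : ℝ} (ha : 1 ≤ a) {m : Joint d1 d2} (hm : m ∈ ZgeSet d1 d2) :
    0 ≤ ⟪Fop A m, m - a • joinPt xs ys⟫ := by
  rw [inner_sub_right, Fop_inner_self A hm, real_inner_smul_right,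
    Fop_inner_star A m hN.1 hN.2.1]
  have hsaddle := nash_saddle hN (normPart (xPart m)) (normPart_mem hm.1)
    (normPart (yPart m)) (normPart_mem hm.2)
  nlinarith [hsaddle]

lemma exrm_step (hd1 : 1 ≤ d1) (hd2 : 1 ≤ d2) (A : Matrix (Fin d1) (Fin d2) ℝ)
    {η : ℝ} (hη0 : 0 ≤ η) (hηL : η * LF A ≤ 1)
    {zc m p s : Joint d1 d2} (hzc : zc ∈ ZgeSet d1 d2) (hs : s ∈ ZgeSet d1 d2)
    (hm : m = projOn (ZgeSet d1 d2) (zc - η • Fop A zc))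
    (hp : p = projOn (ZgeSet d1 d2) (zc - η • Fop A m))
    (hMinty : 0 ≤ ⟪Fop A m, m - s⟫) :
    ‖p - s‖ ≤ ‖zc - s‖ := by
  have hSne := Zge_nonempty hd1 hd2
  have hScl := Zge_closed (d1 := d1) (d2 := d2)
  have hScv := Zge_convex (d1 := d1) (d2 := d2)
  have spec1 := projOn_spec hSne hScl hScv (zc - η • Fop A zc)
  have spec2 := projOn_spec hSne hScl hScv (zc - η • Fop A m)
  rw [← hm] at spec1
  rw [← hp] at spec2
  have hmS : m ∈ ZgeSet d1 d2 := spec1.1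
  have hpS : p ∈ ZgeSet d1 d2 := spec2.1
  set Fm := Fop A m with hFm
  set Fz := Fop A zc with hFz
  -- variational inequalities
  have h1 : ⟪zc - p, s - p⟫ ≤ η * ⟪Fm, s - p⟫ := by
    have h := spec2.2 s hs
    have e : zc - η • Fm - p = (zc - p) - η • Fm := by abel
    rw [e, inner_sub_left, real_inner_smul_left] at h
    linarith
  have h2 : ⟪zc - m, p - m⟫ ≤ η * ⟪Fz, p - m⟫ := by
    have h := spec1.2 p hpS
    have e : zc - η • Fz - m = (zc - m) - η • Fz := by abel
    rw [e, inner_sub_left, real_inner_smul_left] at h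
    linarith
  -- flips and splits
  have F1 : ⟪zc - p, p - s⟫ = -⟪zc - p, s - p⟫ := by
    have e : p - s = -(s - p) := by abel
    rw [e, inner_neg_right]
  have F4 : ⟪zc - m, p - m⟫ = -⟪zc - m, m - p⟫ := by
    have e : p - m = -(m - p) := by abel
    rw [e, inner_neg_right]
  have E1 : ⟪Fm, s - p⟫ = ⟪Fm, s - m⟫ + ⟪Fm, m - p⟫ := by
    rw [← inner_add_right]
    congr 1
    abel
  have E2 : ⟪Fm, m - p⟫ = ⟪Fm - Fz, m - p⟫ + ⟪Fz, m - p⟫ := by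
    rw [inner_sub_left]
    ring
  have F2 : ⟪Fm, s - m⟫ = -⟪Fm, m - s⟫ := by
    have e : s - m = -(m - s) := by abel
    rw [e, inner_neg_right]
  have F3 : ⟪Fz, m - p⟫ = -⟪Fz, p - m⟫ := by
    have e : m - p = -(p - m) := by abel
    rw [e, inner_neg_right]
  -- η-scaled versions
  have E1' : η * ⟪Fm, s - p⟫ = η * ⟪Fm, s - m⟫ + η * ⟪Fm, m - p⟫ := by rw [E1]; ring
  have E2' : η * ⟪Fm, m - p⟫ = η * ⟪Fm - Fz, m - p⟫ + η * ⟪Fz, m - p⟫ := by rw [E2]; ring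
  have F2' : η * ⟪Fm, s - m⟫ = -(η * ⟪Fm, m - s⟫) := by rw [F2]; ring
  have F3' : η * ⟪Fz, m - p⟫ = -(η * ⟪Fz, p - m⟫) := by rw [F3]; ring
  have h2' : η * ⟪Fz, p - m⟫ ≤ ⟪zc - m, m - p⟫ + (η * ⟪Fz, p - m⟫ - ⟪zc - m, p - m⟫) - ⟪zc - m, m - p⟫ + ⟪zc - m, p - m⟫ := by linarith
  have hMinty' : 0 ≤ η * ⟪Fm, m - s⟫ := mul_nonneg hη0 hMinty
  -- Lipschitz / Cauchy-Schwarz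
  have hcs : ⟪Fm - Fz, m - p⟫ ≤ ‖Fm - Fz‖ * ‖m - p‖ := real_inner_le_norm _ _
  have hlip : ‖Fm - Fz‖ ≤ LF A * ‖m - zc‖ := Fop_lip hd1 hd2 A hmS hzc
  have hnn : ‖Fm - Fz‖ * ‖m - p‖ ≤ LF A * ‖m - zc‖ * ‖m - p‖ :=
    mul_le_mul_of_nonneg_right hlip (norm_nonneg _)
  have hprod : η * ⟪Fm - Fz, m - p⟫ ≤ η * (LF A * ‖m - zc‖ * ‖m - p‖) :=
    mul_le_mul_of_nonneg_left (le_trans hcs hnn) hη0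
  have hamgm : 2 * (η * (LF A * ‖m - zc‖ * ‖m - p‖)) ≤ ‖m - zc‖ ^ 2 + ‖m - p‖ ^ 2 := by
    have hab : 0 ≤ ‖m - zc‖ * ‖m - p‖ := mul_nonneg (norm_nonneg _) (norm_nonneg _)
    have hmul : η * LF A * (‖m - zc‖ * ‖m - p‖) ≤ 1 * (‖m - zc‖ * ‖m - p‖) :=
      mul_le_mul_of_nonneg_right hηL hab
    nlinarith [sq_nonneg (‖m - zc‖ - ‖m - p‖)]
  -- norm identities
  have Ia : ‖zc - s‖ ^ 2 = ‖zc - p‖ ^ 2 + 2 * ⟪zc - p, p - s⟫ + ‖p - s‖ ^ 2 := by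
    have hsum : (zc - p) + (p - s) = zc - s := by abel
    have := norm_add_sq_real (zc - p) (p - s)
    rw [hsum] at this
    linarith
  have Ib : ‖zc - p‖ ^ 2 = ‖zc - m‖ ^ 2 + 2 * ⟪zc - m, m - p⟫ + ‖m - p‖ ^ 2 := by
    have hsum : (zc - m) + (m - p) = zc - p := by abel
    have := norm_add_sq_real (zc - m) (m - p)
    rw [hsum] at this
    linarith
  apply sq_le_imp (norm_nonneg _) _ (norm_nonneg _)
  -- combine everything linearly
  have step : ⟪zc - p, s - p⟫ ≤ -(η * ⟪Fm, m - s⟫) + η * ⟪Fm - Fz, m - p⟫ + ⟪zc - m, m - p⟫ := by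
    have hFzbound : η * ⟪Fz, m - p⟫ ≤ ⟪zc - m, m - p⟫ := by
      rw [F3']
      linarith [h2, F4]
    calc ⟪zc - p, s - p⟫ ≤ η * ⟪Fm, s - p⟫ := h1
      _ = η * ⟪Fm, s - m⟫ + η * ⟪Fm - Fz, m - p⟫ + η * ⟪Fz, m - p⟫ := by rw [E1', E2']; ring
      _ ≤ -(η * ⟪Fm, m - s⟫) + η * ⟪Fm - Fz, m - p⟫ + ⟪zc - m, m - p⟫ := by
          rw [F2']
          linarith [hFzbound]
  have hsymm : ‖m - zc‖ ^ 2 = ‖zc - m‖ ^ 2 := by rw [norm_sub_rev]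
  linarith [Ia, Ib, step, hprod, hamgm, F1, hMinty', hsymm]

/-- Geometric structure of limit points of ExRM⁺ relative to any Nash
equilibrium z*. -/
theorem exrmp_structure_of_limit_points {d1 d2 : ℕ} (hd1 : 1 ≤ d1) (hd2 : 1 ≤ d2)
    (A : Matrix (Fin d1) (Fin d2) ℝ) (η : ℝ) (hη0 : 0 < η) (hη1 : η < 1 / LF A)
    (z zh : ℕ → Joint d1 d2) (hEx : ExRM A η z zh)
    (xs : Vec d1) (ys : Vec d2) (hNash : IsNash A xs ys)
    (p q : Joint d1 d2) (hp : IsLimitPoint z p) (hq : IsLimitPoint z q) :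
    (∀ a : ℝ, 1 ≤ a →
      ‖a • joinPt xs ys - p‖ ^ 2 = ‖a • joinPt xs ys - q‖ ^ 2) ∧
    ‖p‖ ^ 2 = ‖q‖ ^ 2 ∧
    ⟪joinPt xs ys, p - q⟫ = 0 := by
  obtain ⟨hz0, hzh, hznext⟩ := hEx
  have hSne := Zge_nonempty hd1 hd2
  have hScl := Zge_closed (d1 := d1) (d2 := d2)
  have hScv := Zge_convex (d1 := d1) (d2 := d2)
  have hzmem : ∀ t, z t ∈ ZgeSet d1 d2 := by
    intro t
    cases t with
    | zero => exact Zset_subset_Zge hz0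
    | succ n => rw [hznext n]; exact (projOn_spec hSne hScl hScv _).1
  have hL0 : 0 < LF A := by
    by_contra h
    push_neg at h
    have h2 : 1 / LF A ≤ 0 := by
      rcases lt_or_eq_of_le h with h' | h'
      · exact le_of_lt (div_neg_of_pos_of_neg one_pos h')
      · rw [h']; simp
    linarith
  have hηL : η * LF A ≤ 1 := le_of_lt ((lt_div_iff₀ hL0).mp hη1)
  have key : ∀ a : ℝ, 1 ≤ a → ‖a • joinPt xs ys - p‖ = ‖a • joinPt xs ys - q‖ := by
    intro a ha
    set s := a • joinPt xs ys with hs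
    have hsS : s ∈ ZgeSet d1 d2 := star_smul_mem hNash.1 hNash.2.1 ha
    have hmono : ∀ t, ‖z (t + 1) - s‖ ≤ ‖z t - s‖ := fun t =>
      exrm_step hd1 hd2 A (le_of_lt hη0) hηL (hzmem t) hsS (hzh t) (hznext t)
        (minty A hNash ha (by rw [hzh t]; exact (projOn_spec hSne hScl hScv _).1))
    have hant : Antitone fun t => ‖z t - s‖ := antitone_nat_of_succ_le hmono
    have hbdd : BddBelow (Set.range fun t => ‖z t - s‖) := by
      refine ⟨0, ?_⟩
      rintro r ⟨t, rfl⟩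
      exact norm_nonneg _
    have hlim : Tendsto (fun t => ‖z t - s‖) atTop (𝓝 (⨅ t, ‖z t - s‖)) :=
      tendsto_atTop_ciInf hant hbdd
    have hlimpt : ∀ {w : Joint d1 d2}, IsLimitPoint z w → ‖w - s‖ = ⨅ t, ‖z t - s‖ := by
      rintro w ⟨φ, hφ, htend⟩
      have h1 : Tendsto (fun k => ‖z (φ k) - s‖) atTop (𝓝 (⨅ t, ‖z t - s‖)) :=
        hlim.comp hφ.tendsto_atTop
      have h2 : Tendsto (fun k => ‖(z ∘ φ) k - s‖) atTop (𝓝 ‖w - s‖) :=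
        (htend.sub tendsto_const_nhds).norm
      exact tendsto_nhds_unique h2 h1
    calc ‖s - p‖ = ‖p - s‖ := norm_sub_rev _ _
      _ = ⨅ t, ‖z t - s‖ := hlimpt hp
      _ = ‖q - s‖ := (hlimpt hq).symm
      _ = ‖s - q‖ := norm_sub_rev _ _
  have part1 : ∀ a : ℝ, 1 ≤ a →
      ‖a • joinPt xs ys - p‖ ^ 2 = ‖a • joinPt xs ys - q‖ ^ 2 := fun a ha => by
    rw [key a ha]
  have E : ∀ (a : ℝ) (w : Joint d1 d2),
      ‖a • joinPt xs ys - w‖ ^ 2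
        = a ^ 2 * ‖joinPt xs ys‖ ^ 2 - 2 * (a * ⟪joinPt xs ys, w⟫) + ‖w‖ ^ 2 := by
    intro a w
    rw [norm_sub_sq_real, real_inner_smul_left, norm_smul]
    simp only [Real.norm_eq_abs, mul_pow, sq_abs]
    try ring
  have G1 := part1 1 le_rfl
  have G2 := part1 2 (by norm_num)
  rw [E 1 p, E 1 q] at G1
  rw [E 2 p, E 2 q] at G2
  refine ⟨part1, by linarith [G1, G2], ?_⟩
  rw [inner_sub_right]
  linarith [G1, G2]
end
end
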